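/- arXiv:1810.09437 — 8 statements merged into one kernel-verified Lean document; each statement's English description precedes it below -/
import Mathlib

section
/- Let l ≥ 1 be an integer and for 1 ≤ i ≤ l let c_i ∈ ℂ \ {0}, α_i ∈ ℂ and n_i ∈ ℕ, with the pairs (α_i, n_i) pairwise distinct. Define f(t) = ∑_{i=1}^l (c_i / n_i!) · t^{1/2 + α_i} (log t)^{n_i} for t > 0. If the limit lim_{T→+∞} ∫_1^T f(t) t^{-2} dt exists in ℂ, then Re α_i < 1/2 for every 1 ≤ i ≤ l. -/
/-!
Substituting `t = eˣ` turns the integral into `∫₀ˣ ∑ aᵢ e^{sᵢx} x^{nᵢ} dx` with `sᵢ = αᵢ - 1/2`.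
Its primitive is an exponential polynomial `G(x) = ∑ b_{i,k} e^{sᵢx} xᵏ` whose `i`-th block has
degree `nᵢ`, or `nᵢ + 1` when `sᵢ = 0`. Suppose `G` converges to `L` although some `Re sᵢ ≥ 0`,
and let `e^{s₀x} x^K` be the term of `G` that is largest for `(Re s, degree)` in lexicographic
order; as the pairs `(sᵢ, nᵢ)` are distinct, only one block contributes to it. Then
`(G(x) - L) e^{-s₀x} → 0`, hence so does its mean `Y^{-K-1} ∫_Y^{2Y}`. In that mean every other
term vanishes: those with smaller real part decay exponentially, those with the same real part and
`s ≠ s₀` oscillate, so that their primitive is only `O(Y^K)`, and lower powers of `x` are too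
small. Only `x^K` survives, with limit `(2^{K+1} - 1)/(K + 1) ≠ 0`.
-/

open Filter Topology Asymptotics Finset

noncomputable def expMonomial (s : ℂ) (k : ℕ) (x : ℝ) : ℂ := Complex.exp (s * x) * (x : ℂ) ^ k

@[fun_prop]
theorem continuous_expMonomial (s : ℂ) (k : ℕ) : Continuous (expMonomial s k) := by
  unfold expMonomial; fun_prop

theorem hasDerivAt_expMonomial (s : ℂ) (k : ℕ) (x : ℝ) :
    HasDerivAt (expMonomial s k) (s * expMonomial s k x + k * expMonomial s (k - 1) x) x := by
  have hexp : HasDerivAt (fun X : ℝ => Complex.exp (s * X)) (s * Complex.exp (s * x)) x := by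
    simpa [mul_comm] using ((hasDerivAt_id (x : ℂ)).const_mul s).cexp.comp_ofReal
  refine (hexp.mul (hasDerivAt_pow k (x : ℂ)).comp_ofReal).congr_deriv ?_
  rcases k with _ | k
  · simp [expMonomial]
  · simp only [expMonomial, Nat.add_sub_cancel]
    push_cast
    ring

theorem norm_expMonomial (s : ℂ) (k : ℕ) {x : ℝ} (hx : 0 ≤ x) :
    ‖expMonomial s k x‖ = Real.exp (s.re * x) * x ^ k := by
  simp [expMonomial, Complex.norm_exp, Complex.norm_real, abs_of_nonneg hx]

theorem expMonomial_zero_left (k : ℕ) (x : ℝ) : expMonomial 0 k x = ((x ^ k : ℝ) : ℂ) := by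
  simp [expMonomial]

theorem expMonomial_mul_cexp (s t : ℂ) (k : ℕ) (x : ℝ) :
    expMonomial s k x * Complex.exp (t * x) = expMonomial (s + t) k x := by
  simp only [expMonomial, add_mul, Complex.exp_add]
  ring

theorem exists_hasDerivAt_sum_expMonomial_of_ne_zero {s : ℂ} (hs : s ≠ 0) (n : ℕ) :
    ∃ b : ℕ → ℂ, b n = s⁻¹ ∧ ∀ x, HasDerivAt
      (fun X => ∑ k ∈ range (n + 1), b k * expMonomial s k X) (expMonomial s n x) x := by
  induction n with
  | zero =>
    refine ⟨fun _ => s⁻¹, rfl, fun x => ?_⟩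
    simp only [zero_add, sum_range_one]
    refine ((hasDerivAt_expMonomial s 0 x).const_mul s⁻¹).congr_deriv ?_
    simp [hs]
  | succ n ih =>
    obtain ⟨b, -, hb⟩ := ih
    -- `∫ e^{sx} x^{n+1} = s⁻¹ e^{sx} x^{n+1} - (n+1) s⁻¹ ∫ e^{sx} x^n`
    refine ⟨Function.update (fun k => -((n + 1) * s⁻¹) * b k) (n + 1) s⁻¹, by simp,
      fun x => ?_⟩
    have hsum : (fun X => ∑ k ∈ range (n + 2),
        Function.update (fun k => -((n + 1) * s⁻¹) * b k) (n + 1) s⁻¹ k * expMonomial s k X) =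
        fun X => s⁻¹ * expMonomial s (n + 1) X +
          -((n + 1) * s⁻¹) * ∑ k ∈ range (n + 1), b k * expMonomial s k X := by
      ext X
      rw [sum_range_succ, Function.update_self, add_comm, mul_sum]
      congr 1
      refine sum_congr rfl fun k hk => ?_
      rw [Function.update_of_ne (mem_range.1 hk).ne, mul_assoc]
    rw [hsum]
    refine (((hasDerivAt_expMonomial s (n + 1) x).const_mul s⁻¹).add
      ((hb x).const_mul (-((n + 1) * s⁻¹)))).congr_deriv ?_
    push_cast
    field_simp
    ring

theorem exists_hasDerivAt_sum_expMonomial (s : ℂ) (n : ℕ) :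
    ∃ B : ℕ → ℂ, B (n + if s = 0 then 1 else 0) ≠ 0 ∧ ∀ x, HasDerivAt
      (fun X => ∑ k ∈ range (n + (if s = 0 then 1 else 0) + 1), B k * expMonomial s k X)
      (expMonomial s n x) x := by
  by_cases hs : s = 0
  · subst hs
    refine ⟨fun k => if k = n + 1 then ((n : ℂ) + 1)⁻¹ else 0, by simp [Nat.cast_add_one_ne_zero],
      fun x => ?_⟩
    simp only [if_true, ite_mul, zero_mul, sum_ite_eq', mem_range, lt_add_one]
    refine ((hasDerivAt_expMonomial 0 (n + 1) x).const_mul ((n : ℂ) + 1)⁻¹).congr_deriv ?_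
    push_cast
    field_simp
    simp
  · obtain ⟨b, hb, hderiv⟩ := exists_hasDerivAt_sum_expMonomial_of_ne_zero hs n
    exact ⟨b, by simp [hs, hb], by simpa [hs] using hderiv⟩

theorem tendsto_expMonomial_of_re_neg {δ : ℂ} (hδ : δ.re < 0) (k : ℕ) :
    Tendsto (expMonomial δ k) atTop (𝓝 0) := by
  rw [tendsto_zero_iff_norm_tendsto_zero]
  refine (tendsto_rpow_mul_exp_neg_mul_atTop_nhds_zero k (-δ.re) (neg_pos.2 hδ)).congr' ?_
  filter_upwards [eventually_ge_atTop 0] with x hx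
  rw [norm_expMonomial δ k hx, Real.rpow_natCast, neg_neg, mul_comm]

theorem isBigO_expMonomial {δ : ℂ} (hδ : δ.re ≤ 0) (k : ℕ) :
    expMonomial δ k =O[atTop] fun x => x ^ k := by
  refine IsBigO.of_bound 1 ?_
  filter_upwards [eventually_ge_atTop 0] with x hx
  rw [norm_expMonomial δ k hx, one_mul, Real.norm_of_nonneg (pow_nonneg hx k)]
  exact mul_le_of_le_one_left (pow_nonneg hx k)
    (Real.exp_le_one_iff.2 (mul_nonpos_of_nonpos_of_nonneg hδ hx))

theorem isBigO_pow_pow_atTop_of_le {p q : ℕ} (hpq : p ≤ q) :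
    (fun x : ℝ => x ^ p) =O[atTop] fun x => x ^ q :=
  (isBigO_pow_pow_cobounded_of_le hpq).mono IsOrderBornology.atTop_le_cobounded

noncomputable def dyadicMean (K : ℕ) (f : ℝ → ℂ) (Y : ℝ) : ℂ :=
  (∫ x in Y..2 * Y, f x) / (Y : ℂ) ^ (K + 1)

theorem dyadicMean_const_mul (K : ℕ) (c : ℂ) (f : ℝ → ℂ) (Y : ℝ) :
    dyadicMean K (fun x => c * f x) Y = c * dyadicMean K f Y := by
  rw [dyadicMean, dyadicMean, intervalIntegral.integral_const_mul, mul_div_assoc]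

theorem dyadicMean_sub (K : ℕ) {f g : ℝ → ℂ} (hf : Continuous f) (hg : Continuous g) (Y : ℝ) :
    dyadicMean K (fun x => f x - g x) Y = dyadicMean K f Y - dyadicMean K g Y := by
  rw [dyadicMean, dyadicMean, dyadicMean, intervalIntegral.integral_sub
    (hf.intervalIntegrable _ _) (hg.intervalIntegrable _ _), sub_div]

theorem dyadicMean_finset_sum {ι : Type*} (K : ℕ) (S : Finset ι) {f : ι → ℝ → ℂ}
    (hf : ∀ j ∈ S, Continuous (f j)) (Y : ℝ) :
    dyadicMean K (fun x => ∑ j ∈ S, f j x) Y = ∑ j ∈ S, dyadicMean K (f j) Y := by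
  rw [dyadicMean, intervalIntegral.integral_finsetSum
    fun j hj => (hf j hj).intervalIntegrable _ _, sum_div]
  rfl

theorem tendsto_dyadicMean_of_isLittleO {K : ℕ} {f : ℝ → ℂ} (hf : f =o[atTop] fun x => x ^ K) :
    Tendsto (dyadicMean K f) atTop (𝓝 0) := by
  rw [NormedAddGroup.tendsto_nhds_zero]
  intro ε hε
  have hc : 0 < ε / 2 ^ (K + 1) := by positivity
  filter_upwards [eventually_forall_ge_atTop.2 (hf.bound hc), eventually_gt_atTop 0]
    with Y hY hY0
  have hbound : ∀ x ∈ Set.uIoc Y (2 * Y), ‖f x‖ ≤ ε / 2 ^ (K + 1) * (2 * Y) ^ K := by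
    intro x hx
    rw [Set.uIoc_of_le (by linarith)] at hx
    refine (hY x hx.1.le).trans ?_
    rw [Real.norm_of_nonneg (pow_nonneg (hY0.trans hx.1).le K)]
    gcongr
    · exact (hY0.trans hx.1).le
    · exact hx.2
  have hint := intervalIntegral.norm_integral_le_of_norm_le_const hbound
  rw [show 2 * Y - Y = Y by ring, abs_of_pos hY0] at hint
  rw [dyadicMean, norm_div, norm_pow, Complex.norm_real, Real.norm_of_nonneg hY0.le,
    div_lt_iff₀ (by positivity)]
  calc _ ≤ ε / 2 ^ (K + 1) * (2 * Y) ^ K * Y := hint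
    _ = ε / 2 * Y ^ (K + 1) := by field_simp; ring
    _ < ε * Y ^ (K + 1) := by gcongr; linarith

theorem tendsto_dyadicMean_of_tendsto_zero (K : ℕ) {f : ℝ → ℂ}
    (hf : Tendsto f atTop (𝓝 0)) : Tendsto (dyadicMean K f) atTop (𝓝 0) := by
  refine tendsto_dyadicMean_of_isLittleO (((isLittleO_one_iff ℝ).2 hf).trans_isBigO ?_)
  simpa using isBigO_pow_pow_atTop_of_le (Nat.zero_le K)

theorem tendsto_dyadicMean_of_hasDerivAt {K : ℕ} {F f : ℝ → ℂ} (hF : ∀ x, HasDerivAt F (f x) x)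
    (hf : Continuous f) (hFo : F =o[atTop] fun x => x ^ (K + 1)) :
    Tendsto (dyadicMean K f) atTop (𝓝 0) := by
  have hdiv : Tendsto (fun Y => F Y / (Y : ℂ) ^ (K + 1)) atTop (𝓝 0) := by
    simpa using (Complex.isLittleO_ofReal_right.2 hFo).tendsto_div_nhds_zero
  have hdiv2 : Tendsto (fun Y => F (2 * Y) / (Y : ℂ) ^ (K + 1)) atTop (𝓝 0) := by
    have := (hdiv.comp (tendsto_id.const_mul_atTop two_pos)).const_mul (2 ^ (K + 1))
    rw [mul_zero] at this
    refine this.congr' ?_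
    filter_upwards [eventually_gt_atTop 0] with Y hY
    have : (Y : ℂ) ≠ 0 := by exact_mod_cast hY.ne'
    simp only [Function.comp_apply, id, Complex.ofReal_mul, Complex.ofReal_ofNat, mul_pow]
    field_simp
  rw [← sub_zero 0]
  refine (hdiv2.sub hdiv).congr fun Y => ?_
  rw [dyadicMean, intervalIntegral.integral_eq_sub_of_hasDerivAt (fun x _ => hF x)
    (hf.intervalIntegrable _ _), sub_div]

/-- The three ways in which `cexp (δ x) x ^ k` disappears from `dyadicMean K`. -/
def IsSubdominant (δ : ℂ) (k K : ℕ) : Prop :=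
  δ.re < 0 ∨ (δ.re = 0 ∧ δ ≠ 0 ∧ k ≤ K) ∨ (δ = 0 ∧ k < K)

theorem IsSubdominant.re_nonpos {δ : ℂ} {k K : ℕ} (h : IsSubdominant δ k K) : δ.re ≤ 0 := by
  rcases h with h | ⟨h, -⟩ | ⟨rfl, -⟩
  exacts [h.le, h.le, le_rfl]

theorem IsSubdominant.of_toLex_le {s s₀ : ℂ} {k K : ℕ} (hle : toLex (s.re, k) ≤ toLex (s₀.re, K))
    (hne : (s, k) ≠ (s₀, K)) : IsSubdominant (s - s₀) k K := by
  obtain hlt | ⟨heq, hkK⟩ : s.re < s₀.re ∨ s.re = s₀.re ∧ k ≤ K := Prod.Lex.toLex_le_toLex.1 hle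
  · exact Or.inl (by simpa using hlt)
  rcases eq_or_ne s s₀ with rfl | hs
  · exact Or.inr (Or.inr ⟨sub_self s, hkK.lt_of_ne fun h => hne (by rw [h])⟩)
  · exact Or.inr (Or.inl ⟨by simp [heq], sub_ne_zero.2 hs, hkK⟩)

theorem isBigO_sum_expMonomial {δ : ℂ} (hδ : δ.re ≤ 0) (b : ℕ → ℂ) (k : ℕ) :
    (fun x => ∑ j ∈ range (k + 1), b j * expMonomial δ j x) =O[atTop] fun x => x ^ k := by
  have := IsBigO.sum (s := range (k + 1)) (A := fun j x => b j * expMonomial δ j x)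
    fun j hj => ((isBigO_expMonomial hδ j).const_mul_left (b j)).trans
      (isBigO_pow_pow_atTop_of_le (Nat.lt_succ_iff.1 (mem_range.1 hj)))
  simpa [Finset.sum_fn] using this

theorem tendsto_dyadicMean_expMonomial {δ : ℂ} {k K : ℕ} (h : IsSubdominant δ k K) :
    Tendsto (dyadicMean K (expMonomial δ k)) atTop (𝓝 0) := by
  rcases h with hδ | ⟨hδ, hδ0, hkK⟩ | ⟨rfl, hkK⟩
  · exact tendsto_dyadicMean_of_tendsto_zero K (tendsto_expMonomial_of_re_neg hδ k)
  · -- oscillation: the primitive of `cexp (δ x) x ^ k` is still only `O(x ^ k)`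
    obtain ⟨b, -, hb⟩ := exists_hasDerivAt_sum_expMonomial_of_ne_zero hδ0 k
    exact tendsto_dyadicMean_of_hasDerivAt hb (continuous_expMonomial δ k)
      ((isBigO_sum_expMonomial hδ.le b k).trans_isLittleO
        (isLittleO_pow_pow_atTop_of_lt (Nat.lt_succ_of_le hkK)))
  · refine tendsto_dyadicMean_of_isLittleO ?_
    rw [show expMonomial 0 k = fun x => ((x ^ k : ℝ) : ℂ) from funext (expMonomial_zero_left k)]
    exact Complex.isLittleO_ofReal_left.2 (isLittleO_pow_pow_atTop_of_lt hkK)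

theorem dyadicMean_expMonomial_zero {K : ℕ} {Y : ℝ} (hY : 0 < Y) :
    dyadicMean K (expMonomial 0 K) Y = (2 ^ (K + 1) - 1) / (K + 1) := by
  have hY' : (Y : ℂ) ≠ 0 := by exact_mod_cast hY.ne'
  simp only [dyadicMean, expMonomial_zero_left, intervalIntegral.integral_ofReal, integral_pow]
  push_cast
  field_simp
  ring

theorem tendsto_dyadicMean_sum_expMonomial {ι : Type*} (S : Finset ι) (c δ : ι → ℂ) (k : ι → ℕ)
    {j₀ : ι} (hj₀ : j₀ ∈ S) (hδ₀ : δ j₀ = 0)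
    (hsub : ∀ j ∈ S, j ≠ j₀ → IsSubdominant (δ j) (k j) (k j₀)) :
    Tendsto (dyadicMean (k j₀) fun x => ∑ j ∈ S, c j * expMonomial (δ j) (k j) x) atTop
      (𝓝 (c j₀ * ((2 ^ (k j₀ + 1) - 1) / (k j₀ + 1)))) := by
  classical
  have hlim : ∀ j ∈ S, Tendsto (fun Y => c j * dyadicMean (k j₀) (expMonomial (δ j) (k j)) Y)
      atTop (𝓝 (if j = j₀ then c j₀ * ((2 ^ (k j₀ + 1) - 1) / (k j₀ + 1)) else 0)) := by
    intro j hj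
    by_cases hjj : j = j₀
    · subst hjj
      rw [if_pos rfl, hδ₀]
      refine tendsto_const_nhds.congr' ?_
      filter_upwards [eventually_gt_atTop 0] with Y hY
      rw [dyadicMean_expMonomial_zero hY]
    · rw [if_neg hjj, ← mul_zero (c j)]
      exact (tendsto_dyadicMean_expMonomial (hsub j hj hjj)).const_mul (c j)
  have := tendsto_finsetSum S hlim
  rw [sum_ite_eq' S j₀, if_pos hj₀] at this
  refine this.congr fun Y => ?_
  rw [dyadicMean_finset_sum _ _ fun j _ => by fun_prop]
  simp only [dyadicMean_const_mul]

theorem not_tendsto_sum_expMonomial {ι : Type*} (S : Finset ι) (c t : ι → ℂ) (k : ι → ℕ)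
    {j₀ : ι} (hj₀ : j₀ ∈ S) (hc : c j₀ ≠ 0) (hconst : IsSubdominant (-t j₀) 0 (k j₀))
    (hsub : ∀ j ∈ S, j ≠ j₀ → IsSubdominant (t j - t j₀) (k j) (k j₀)) (L : ℂ) :
    ¬ Tendsto (fun x => ∑ j ∈ S, c j * expMonomial (t j) (k j) x) atTop (𝓝 L) := by
  intro hlim
  set F := fun x => ∑ j ∈ S, c j * expMonomial (t j) (k j) x
  have hbdd : ∀ x : ℝ, 0 ≤ x → ‖Complex.exp (-t j₀ * x)‖ ≤ 1 := by
    intro x hx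
    rw [Complex.norm_exp]
    exact Real.exp_le_one_iff.2 (by simpa using mul_nonpos_of_nonpos_of_nonneg hconst.re_nonpos hx)
  have hzero : Tendsto (dyadicMean (k j₀) fun x => (F x - L) * Complex.exp (-t j₀ * x))
      atTop (𝓝 0) := by
    refine tendsto_dyadicMean_of_tendsto_zero _ (Tendsto.zero_mul_isBoundedUnder_le ?_ ?_)
    · simpa using hlim.sub_const L
    · exact isBoundedUnder_of_eventually_le (a := 1)
        ((eventually_ge_atTop 0).mono hbdd)
  have hexpand : ∀ x : ℝ, (F x - L) * Complex.exp (-t j₀ * x) =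
      ∑ j ∈ S, c j * expMonomial (t j - t j₀) (k j) x - L * expMonomial (-t j₀) 0 x := by
    intro x
    simp only [F, sub_mul, sum_mul, mul_assoc, expMonomial_mul_cexp, ← sub_eq_add_neg]
    simp [expMonomial]
  have hlimit := (tendsto_dyadicMean_sum_expMonomial S c (fun j => t j - t j₀) k hj₀
    (sub_self _) hsub).sub ((tendsto_dyadicMean_expMonomial hconst).const_mul L)
  have hv : ((2 : ℂ) ^ (k j₀ + 1) - 1) / (k j₀ + 1) ≠ 0 :=
    div_ne_zero (sub_ne_zero.2 (by exact_mod_cast (Nat.one_lt_two_pow (by omega)).ne'))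
      (Nat.cast_add_one_ne_zero _)
  have hsame : ∀ Y, dyadicMean (k j₀) (fun x => ∑ j ∈ S, c j * expMonomial (t j - t j₀) (k j) x) Y
      - L * dyadicMean (k j₀) (expMonomial (-t j₀) 0) Y =
      dyadicMean (k j₀) (fun x => (F x - L) * Complex.exp (-t j₀ * x)) Y := fun Y => by
    simp only [hexpand]
    rw [dyadicMean_sub _ (by fun_prop) (by fun_prop), dyadicMean_const_mul]
  have hvalue := tendsto_nhds_unique (hlimit.congr hsame) hzero
  rw [mul_zero, sub_zero] at hvalue
  exact mul_ne_zero hc hv hvalue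

theorem re_lt_zero_of_tendsto_integral_sum_expMonomial {ι : Type*} [Fintype ι] (a s : ι → ℂ)
    (n : ι → ℕ) (ha : ∀ i, a i ≠ 0) (hinj : Function.Injective fun i => (s i, n i)) {L : ℂ}
    (hlim : Tendsto (fun X => ∫ x in (0 : ℝ)..X, ∑ i, a i * expMonomial (s i) (n i) x) atTop
      (𝓝 L)) (i : ι) : (s i).re < 0 := by
  by_contra! hi
  choose B hB hderiv using fun i => exists_hasDerivAt_sum_expMonomial (s i) (n i)
  set m : ι → ℕ := fun i => n i + if s i = 0 then 1 else 0
  set S := (univ : Finset ι).sigma fun i => range (m i + 1)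
  set G : ℝ → ℂ := fun x => ∑ p ∈ S, a p.1 * B p.1 p.2 * expMonomial (s p.1) p.2 x
  have hG : ∀ x, HasDerivAt G (∑ i, a i * expMonomial (s i) (n i) x) x := by
    intro x
    have hGeq : G = fun X => ∑ i, a i * ∑ k ∈ range (m i + 1), B i k * expMonomial (s i) k X := by
      ext X
      simp only [G, S, sum_sigma, mul_sum, mul_assoc]
    rw [hGeq]
    exact HasDerivAt.fun_sum fun i _ => (hderiv i x).const_mul (a i)
  have hGlim : Tendsto G atTop (𝓝 (L + G 0)) := by
    refine (hlim.add_const (G 0)).congr fun X => ?_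
    rw [intervalIntegral.integral_eq_sub_of_hasDerivAt (fun x _ => hG x)
      (Continuous.intervalIntegrable (by fun_prop) _ _), sub_add_cancel]
  obtain ⟨i₀, -, hi₀⟩ := univ.exists_max_image (fun i => toLex ((s i).re, m i)) ⟨i, mem_univ i⟩
  have hre : 0 ≤ (s i₀).re := hi.trans (Prod.Lex.monotone_fst _ _ (hi₀ i (mem_univ i)))
  refine not_tendsto_sum_expMonomial S (fun p => a p.1 * B p.1 p.2) (fun p => s p.1) Sigma.snd
    (j₀ := ⟨i₀, m i₀⟩) (by simp [S]) (mul_ne_zero (ha i₀) (hB i₀)) ?_ ?_ _ hGlim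
  · have h0 : ((0 : ℂ), 0) ≠ (s i₀, m i₀) := fun h => by
      obtain ⟨hs, hm⟩ := Prod.mk.injEq .. ▸ h
      simp [m, ← hs] at hm
    simpa using IsSubdominant.of_toLex_le (s := 0) (k := 0)
      (Prod.Lex.toLex_le_toLex'.2 ⟨by simpa using hre, fun _ => Nat.zero_le _⟩) h0
  · rintro ⟨j, k⟩ hjk hne
    have hk : k ≤ m j := Nat.lt_succ_iff.1 (mem_range.1 (mem_sigma.1 hjk).2)
    refine IsSubdominant.of_toLex_le
      ((Prod.Lex.toLex_mono (Prod.mk_le_mk.2 ⟨le_rfl, hk⟩)).trans (hi₀ j (mem_univ j))) ?_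
    show (s j, k) ≠ (s i₀, m i₀)
    intro h
    obtain ⟨hs, rfl⟩ := Prod.mk.injEq .. ▸ h
    have hmj : m j ≤ m i₀ := (Prod.Lex.toLex_le_toLex'.1 (hi₀ j (mem_univ j))).2 (by rw [hs])
    have hn : n j = n i₀ := by simpa [m, hs] using le_antisymm hmj hk
    exact hne (by rw [hinj (Prod.ext hs hn)])

theorem integral_one_exp {E : Type*} [NormedAddCommGroup E] [NormedSpace ℝ E] (g : ℝ → E)
    (X : ℝ) : ∫ t in (1 : ℝ)..Real.exp X, g t = ∫ x in (0 : ℝ)..X, Real.exp x • g (Real.exp x) := by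
  simpa using (intervalIntegral.integral_deriv_smul_comp_of_deriv_nonneg (a := 0) (b := X) (g := g)
    Real.continuous_exp.continuousOn (fun x _ => Real.hasDerivAt_exp x)
    (fun x _ => (Real.exp_pos x).le)).symm

theorem ofReal_exp_cpow (x : ℝ) (z : ℂ) : (Real.exp x : ℂ) ^ z = Complex.exp (x * z) := by
  rw [Complex.cpow_def_of_ne_zero (by exact_mod_cast (Real.exp_pos x).ne'),
    ← Complex.ofReal_log (Real.exp_pos x).le, Real.log_exp]

theorem exp_smul_cpow_mul_log_pow_div_sq (b α : ℂ) (k : ℕ) (x : ℝ) :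
    Real.exp x • (b * (Real.exp x : ℂ) ^ ((1 : ℂ) / 2 + α) * (Real.log (Real.exp x) : ℂ) ^ k
      / (Real.exp x : ℂ) ^ 2) = b * expMonomial (α - 1 / 2) k x := by
  have hexp : Complex.exp ((α - 1 / 2) * x) =
      Complex.exp x * Complex.exp (x * ((1 : ℂ) / 2 + α)) / Complex.exp x ^ 2 := by
    rw [sq, ← Complex.exp_add, ← Complex.exp_add, ← Complex.exp_sub]
    ring_nf
  rw [Real.log_exp, Complex.real_smul, ofReal_exp_cpow, Complex.ofReal_exp, expMonomial, hexp]
  ring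

theorem stmt_0_general (l : ℕ) (c : Fin l → ℂ) (α : Fin l → ℂ) (n : Fin l → ℕ)
    (hc : ∀ i, c i ≠ 0)
    (hdist : Function.Injective fun i => (α i, n i))
    (L : ℂ)
    (hlim : Tendsto (fun T : ℝ => ∫ t in (1:ℝ)..T,
        (∑ i, c i / ((n i).factorial : ℂ) * (t : ℂ) ^ ((1:ℂ)/2 + α i) * (Real.log t : ℂ) ^ (n i))
          / (t : ℂ) ^ 2)
      atTop (nhds L)) :
    ∀ i, (α i).re < 1/2 := by
  have hsubst : ∀ X : ℝ, ∫ t in (1 : ℝ)..Real.exp X,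
      (∑ i, c i / ((n i).factorial : ℂ) * (t : ℂ) ^ ((1 : ℂ) / 2 + α i) *
        (Real.log t : ℂ) ^ (n i)) / (t : ℂ) ^ 2 =
      ∫ x in (0 : ℝ)..X, ∑ i, c i / ((n i).factorial : ℂ) * expMonomial (α i - 1 / 2) (n i) x := by
    intro X
    rw [integral_one_exp]
    refine intervalIntegral.integral_congr fun x _ => ?_
    simp only [sum_div, smul_sum, exp_smul_cpow_mul_log_pow_div_sq]
  intro i
  have hinj : Function.Injective fun i => (α i - 1 / 2, n i) := fun i j h => hdist (by
    simp only [Prod.mk.injEq, sub_left_inj] at h ⊢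
    exact h)
  have := re_lt_zero_of_tendsto_integral_sum_expMonomial _ _ n
    (fun i => div_ne_zero (hc i) (Nat.cast_ne_zero.2 (Nat.factorial_ne_zero _))) hinj
    ((hlim.comp Real.tendsto_exp_atTop).congr hsubst) i
  simpa [sub_neg] using this

/-- If `f(t) = ∑_{i=1}^l (c_i/n_i!) t^{1/2+α_i} (log t)^{n_i}` (with `c_i ≠ 0` and the pairs
`(α_i, n_i)` pairwise distinct) and `lim_{T→∞} ∫_1^T f(t) t^{-2} dt` exists, then
`Re α_i < 1/2` for all `i`. -/
theorem stmt_0 (l : ℕ) (hl : 1 ≤ l) (c : Fin l → ℂ) (α : Fin l → ℂ) (n : Fin l → ℕ)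
    (hc : ∀ i, c i ≠ 0)
    (hdist : Function.Injective fun i => (α i, n i))
    (L : ℂ)
    (hlim : Tendsto (fun T : ℝ => ∫ t in (1:ℝ)..T,
        (∑ i, c i / ((n i).factorial : ℂ) * (t : ℂ) ^ ((1:ℂ)/2 + α i) * (Real.log t : ℂ) ^ (n i))
          / (t : ℂ) ^ 2)
      atTop (nhds L)) :
    ∀ i, (α i).re < 1/2 :=
  stmt_0_general l c α n hc hdist L hlim
end

section
/- Let n ≥ 1, θ⃗ ∈ ℝ^n, let π : ℝ^n → (ℝ/ℤ)^n denote the quotient map onto the n-torus, let T_θ be the closure in (ℝ/ℤ)^n of the set {π(tθ⃗) : t ∈ ℝ} (a closed subgroup of the torus), and let m_θ be the Haar probability measure on the compact group T_θ. Then for every continuous function f : T_θ → ℂ and every x ∈ T_θ, lim_{T→+∞} (1/T) ∫_0^T f(x + π(tθ⃗)) dt = ∫_{T_θ} f dm_θ. -/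
/-!
Time averages along a path and integrals against a probability measure are both 1-Lipschitz
in the sup norm, so the continuous functions on the torus whose time averages along
`t ↦ x + π(tθ)` converge to their integral against the image of `m_θ` form a closed subspace.
By Stone–Weierstrass it suffices that it contain every character `χ_k`, and
`χ_k(x + π(tθ)) = χ_k(x) e^{iat}` with `a = 2π⟨k, θ⟩`. If `a = 0`, then `χ_k ≡ 1` on the orbit
closure `T_θ`. Otherwise both sides vanish: the time average of `e^{iat}` is `O(1/T)`, and
`χ_k` takes the value `-1` on `T_θ`, which by translation invariance forces `∫ χ_k dm_θ = 0`.
Finally, a continuous function on the closed set `T_θ` extends to the torus by Tietze.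
-/

open Filter MeasureTheory Complex Topology
open scoped Real

noncomputable section

def timeAverage (g : ℝ → ℂ) (T : ℝ) : ℂ := 1 / (T : ℂ) * ∫ t in (0:ℝ)..T, g t

lemma norm_timeAverage_le {g : ℝ → ℂ} {C : ℝ} (hg : ∀ t, ‖g t‖ ≤ C) (T : ℝ) :
    ‖timeAverage g T‖ ≤ C := by
  rcases eq_or_ne T 0 with rfl | hT
  · simpa [timeAverage] using (norm_nonneg _).trans (hg 0)
  have hint := intervalIntegral.norm_integral_le_of_norm_le_const (a := 0) (b := T)
    fun t _ => hg t
  rw [timeAverage, norm_mul, norm_div, norm_one, norm_real, Real.norm_eq_abs]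
  calc 1 / |T| * ‖∫ t in (0:ℝ)..T, g t‖ ≤ 1 / |T| * (C * |T - 0|) := by gcongr
    _ = C := by rw [sub_zero]; field_simp [abs_ne_zero.mpr hT]

lemma tendsto_timeAverage_zero_of_norm_integral_le {g : ℝ → ℂ} {C : ℝ}
    (hg : ∀ T, ‖∫ t in (0:ℝ)..T, g t‖ ≤ C) : Tendsto (timeAverage g) atTop (𝓝 0) := by
  refine squeeze_zero_norm' ?_ (tendsto_const_nhds (x := C).div_atTop tendsto_id)
  filter_upwards [eventually_gt_atTop 0] with T hT
  rw [timeAverage, norm_mul, norm_div, norm_one, norm_real, Real.norm_eq_abs, abs_of_pos hT,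
    id, one_div_mul_eq_div]
  gcongr
  exact hg T

lemma tendsto_timeAverage_exp_mul_I {a : ℝ} (ha : a ≠ 0) :
    Tendsto (timeAverage fun t => exp (↑(a * t) * I)) atTop (𝓝 0) := by
  have hc : (a : ℂ) * I ≠ 0 := mul_ne_zero (ofReal_ne_zero.mpr ha) I_ne_zero
  refine tendsto_timeAverage_zero_of_norm_integral_le (C := 2 / ‖(a : ℂ) * I‖) fun T => ?_
  have hexp : ∀ t : ℝ, exp (↑(a * t) * I) = exp ((a : ℂ) * I * t) := fun t => by
    push_cast; ring_nf
  simp only [hexp, integral_exp_mul_complex hc, ofReal_zero, mul_zero, exp_zero, norm_div]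
  gcongr
  calc ‖exp ((a : ℂ) * I * T) - 1‖ ≤ ‖exp ((a : ℂ) * I * T)‖ + ‖(1 : ℂ)‖ := norm_sub_le _ _
    _ = 2 := by rw [← hexp, norm_exp_ofReal_mul_I, norm_one]; norm_num

lemma timeAverage_add {f g : ℝ → ℂ} (hf : Continuous f) (hg : Continuous g) (T : ℝ) :
    timeAverage (f + g) T = timeAverage f T + timeAverage g T := by
  simp only [timeAverage, Pi.add_apply,
    intervalIntegral.integral_add (hf.intervalIntegrable 0 T) (hg.intervalIntegrable 0 T), mul_add]

lemma timeAverage_sub {f g : ℝ → ℂ} (hf : Continuous f) (hg : Continuous g) (T : ℝ) :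
    timeAverage (f - g) T = timeAverage f T - timeAverage g T := by
  simp only [timeAverage, Pi.sub_apply,
    intervalIntegral.integral_sub (hf.intervalIntegrable 0 T) (hg.intervalIntegrable 0 T), mul_sub]

lemma timeAverage_const_mul (c : ℂ) (g : ℝ → ℂ) (T : ℝ) :
    timeAverage (fun t => c * g t) T = c * timeAverage g T := by
  simp only [timeAverage, intervalIntegral.integral_const_mul]
  ring

lemma tendsto_timeAverage_const (c : ℂ) :
    Tendsto (timeAverage fun _ => c) atTop (𝓝 c) := by
  refine tendsto_const_nhds.congr' ?_
  filter_upwards [eventually_ne_atTop 0] with T hT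
  simp [timeAverage, hT]

lemma lipschitzWith_one_timeAverage {X : Type*} [TopologicalSpace X] [CompactSpace X]
    (γ : C(ℝ, X)) (T : ℝ) : LipschitzWith 1 fun g : C(X, ℂ) => timeAverage (g ∘ γ) T := by
  refine LipschitzWith.of_dist_le_mul fun f g => ?_
  rw [NNReal.coe_one, one_mul, dist_eq_norm, dist_eq_norm,
    ← timeAverage_sub (f.continuous.comp γ.continuous) (g.continuous.comp γ.continuous)]
  exact norm_timeAverage_le (fun t => (f - g).norm_coe_le_norm (γ t)) T

section TimeAverageSubmodule

variable {X : Type*} [TopologicalSpace X] [CompactSpace X] [MeasurableSpace X]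
  [OpensMeasurableSpace X]

lemma ContinuousMap.integrable_of_compactSpace (μ : Measure X) [IsFiniteMeasure μ] (g : C(X, ℂ)) :
    Integrable g μ :=
  g.continuous.integrable_of_hasCompactSupport (.of_compactSpace _)

def timeAverageSubmodule (μ : Measure X) [IsFiniteMeasure μ] (γ : C(ℝ, X)) :
    Submodule ℂ C(X, ℂ) where
  carrier := {g | Tendsto (timeAverage (g ∘ γ)) atTop (𝓝 (∫ y, g y ∂μ))}
  zero_mem' := by
    simp only [Set.mem_ofPred_eq, ContinuousMap.coe_zero, Pi.zero_apply, integral_zero]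
    exact tendsto_const_nhds.congr fun T => by simp [timeAverage]
  add_mem' {f g} hf hg := by
    simp only [Set.mem_ofPred_eq, ContinuousMap.coe_add, Pi.add_apply,
      integral_add (f.integrable_of_compactSpace μ) (g.integrable_of_compactSpace μ)] at *
    exact (hf.add hg).congr fun T =>
      (timeAverage_add (f.continuous.comp γ.continuous) (g.continuous.comp γ.continuous) T).symm
  smul_mem' c g hg := by
    simp only [Set.mem_ofPred_eq, ContinuousMap.coe_smul, Pi.smul_apply, smul_eq_mul,
      integral_const_mul] at *
    exact (hg.const_mul c).congr fun T => (timeAverage_const_mul c _ T).symm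

lemma mem_timeAverageSubmodule {μ : Measure X} [IsFiniteMeasure μ] {γ : C(ℝ, X)} {g : C(X, ℂ)} :
    g ∈ timeAverageSubmodule μ γ ↔
      Tendsto (timeAverage (g ∘ γ)) atTop (𝓝 (∫ y, g y ∂μ)) := Iff.rfl

lemma lipschitzWith_one_integral (μ : Measure X) [IsProbabilityMeasure μ] :
    LipschitzWith 1 fun g : C(X, ℂ) => ∫ y, g y ∂μ := by
  refine LipschitzWith.of_dist_le_mul fun f g => ?_
  rw [NNReal.coe_one, one_mul, dist_eq_norm, dist_eq_norm,
    ← integral_sub (f.integrable_of_compactSpace μ) (g.integrable_of_compactSpace μ)]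
  simpa using norm_integral_le_of_norm_le_const (μ := μ)
    (Eventually.of_forall fun y => (f - g).norm_coe_le_norm y)

lemma isClosed_timeAverageSubmodule (μ : Measure X) [IsProbabilityMeasure μ] (γ : C(ℝ, X)) :
    IsClosed (timeAverageSubmodule μ γ : Set C(X, ℂ)) :=
  (LipschitzWith.uniformEquicontinuous _ 1 fun T => lipschitzWith_one_timeAverage γ T)
    |>.equicontinuous.isClosed_setOfPred_tendsto (lipschitzWith_one_integral μ).continuous

end TimeAverageSubmodule

lemma integral_eq_zero_of_map_add_eq_mul {G : Type*} [AddGroup G] [MeasurableSpace G]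
    [MeasurableAdd G] (μ : Measure G) [μ.IsAddLeftInvariant] {χ : G → ℂ}
    (hχ : ∀ g h, χ (g + h) = χ g * χ h) {g₀ : G} (hg₀ : χ g₀ ≠ 1) : ∫ y, χ y ∂μ = 0 := by
  have hinv := integral_add_left_eq_self (μ := μ) χ g₀
  simp only [hχ, integral_const_mul] at hinv
  exact (mul_left_eq_self₀.mp hinv).resolve_left hg₀

namespace UnitAddTorus

section LinearFlow

variable {d : Type*}

def linearFlow (θ : d → ℝ) : C(ℝ, UnitAddTorus d) where
  toFun t i := ((t * θ i : ℝ) : UnitAddCircle)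
  continuous_toFun := by fun_prop

lemma linearFlow_mem {θ : d → ℝ} {G : AddSubgroup (UnitAddTorus d)}
    (hG : (G : Set (UnitAddTorus d)) = closure (Set.range (linearFlow θ)))
    (t : ℝ) : linearFlow θ t ∈ G := by
  rw [← SetLike.mem_coe, hG]
  exact subset_closure ⟨t, rfl⟩

end LinearFlow

variable {d : Type*} [Fintype d]

theorem timeAverageSubmodule_eq_top_of_mFourier_mem (μ : Measure (UnitAddTorus d))
    [IsProbabilityMeasure μ] (γ : C(ℝ, UnitAddTorus d))
    (h : ∀ k, mFourier k ∈ timeAverageSubmodule μ γ) : timeAverageSubmodule μ γ = ⊤ := by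
  refine eq_top_iff.2 ?_
  rw [← span_mFourier_closure_eq_top]
  exact Submodule.topologicalClosure_minimal _ (Submodule.span_le.2 (Set.range_subset_iff.2 h))
    (isClosed_timeAverageSubmodule μ γ)

lemma mFourier_add_apply (k : d → ℤ) (x y : UnitAddTorus d) :
    mFourier k (x + y) = mFourier k x * mFourier k y := by
  simp only [mFourier, ContinuousMap.coe_mk, Pi.add_apply, fourier_apply, smul_add,
    AddCircle.toCircle_add, Circle.coe_mul, Finset.prod_mul_distrib]

lemma mFourier_linearFlow (k : d → ℤ) (θ : d → ℝ) (t : ℝ) :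
    mFourier k (linearFlow θ t) = exp (↑(2 * π * (∑ i, k i * θ i) * t) * I) := by
  simp only [mFourier, linearFlow, ContinuousMap.coe_mk, fourier_coe_apply, ← exp_sum]
  congr 1
  push_cast
  simp only [Finset.mul_sum, Finset.sum_mul]
  exact Finset.sum_congr rfl fun i _ => by ring

variable {θ : d → ℝ} {G : AddSubgroup (UnitAddTorus d)}

lemma timeAverage_mFourier_comp_const_add_linearFlow (k : d → ℤ) (x : UnitAddTorus d) :
    timeAverage (mFourier k ∘ (ContinuousMap.const ℝ x + linearFlow θ : C(ℝ, UnitAddTorus d))) =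
      fun T => mFourier k x *
        timeAverage (fun t => exp (↑(2 * π * (∑ i, k i * θ i) * t) * I)) T := by
  funext T
  rw [← timeAverage_const_mul]
  congr 1
  funext t
  simp [mFourier_add_apply, mFourier_linearFlow]

theorem mFourier_mem_timeAverageSubmodule
    (hG : (G : Set (UnitAddTorus d)) = closure (Set.range (linearFlow θ)))
    (m : Measure G) [m.IsAddLeftInvariant] [IsProbabilityMeasure m] (x : G) (k : d → ℤ) :
    mFourier k ∈ timeAverageSubmodule (m.map Subtype.val)
      (ContinuousMap.const ℝ (x : UnitAddTorus d) + linearFlow θ) := by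
  rw [mem_timeAverageSubmodule, timeAverage_mFourier_comp_const_add_linearFlow,
    integral_map measurable_subtype_coe.aemeasurable (mFourier k).continuous.aestronglyMeasurable]
  set a := 2 * π * ∑ i, k i * θ i
  have hflow : ∀ t, mFourier k (linearFlow θ t) = exp (↑(a * t) * I) := mFourier_linearFlow k θ
  by_cases ha : a = 0
  · have hone : ∀ y ∈ G, mFourier k y = 1 := by
      have : Set.EqOn (mFourier k) 1 (Set.range (linearFlow θ)) := by
        rintro _ ⟨t, rfl⟩
        simp [hflow, ha]
      intro y hy
      exact this.closure (mFourier k).continuous continuous_const (hG ▸ hy)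
    simp only [hone _ x.2, hone _ (Subtype.property _), ha, zero_mul, ofReal_zero, exp_zero,
      one_mul, integral_const, probReal_univ, one_smul]
    exact tendsto_timeAverage_const 1
  · have hhalf : mFourier k (linearFlow θ (π / a)) ≠ 1 := by
      rw [hflow, mul_div_cancel₀ _ ha, exp_pi_mul_I]
      norm_num
    rw [integral_eq_zero_of_map_add_eq_mul m (χ := fun y : G => mFourier k y)
      (fun g h => mFourier_add_apply k g h) (g₀ := ⟨_, linearFlow_mem hG (π / a)⟩) hhalf]
    simpa using (tendsto_timeAverage_exp_mul_I ha).const_mul (mFourier k x)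

end UnitAddTorus

end

open UnitAddTorus

/-- Unique ergodicity of the linear flow `t ↦ π(t θ)` on the closed subgroup `T_θ` of the
`n`-torus which is the closure of its image: time averages of a continuous function along
the flow started at any point `x ∈ T_θ` converge to the average against the Haar
probability measure of `T_θ`. -/
theorem stmt_1 (n : ℕ) (θ : Fin n → ℝ)
    (G : AddSubgroup (Fin n → AddCircle (1 : ℝ)))
    (hG : (G : Set (Fin n → AddCircle (1 : ℝ))) =
      closure (Set.range fun t : ℝ => fun i => ((t * θ i : ℝ) : AddCircle (1 : ℝ))))
    (m : Measure G) [m.IsAddHaarMeasure] [IsProbabilityMeasure m]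
    (f : G → ℂ) (hf : Continuous f) (x : G) :
    Tendsto (fun T : ℝ => (1 / (T : ℂ)) * ∫ t in (0:ℝ)..T,
        f (x + ⟨fun i => ((t * θ i : ℝ) : AddCircle (1 : ℝ)), by
          have hmem : (fun i => ((t * θ i : ℝ) : AddCircle (1 : ℝ)))
              ∈ (G : Set (Fin n → AddCircle (1 : ℝ))) := by
            rw [hG]; exact subset_closure ⟨t, rfl⟩
          exact hmem⟩))
      atTop (nhds (∫ y, f y ∂m)) := by
  have hGc : IsClosed (G : Set (UnitAddTorus (Fin n))) := hG ▸ isClosed_closure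
  have : CompactSpace G := isCompact_iff_compactSpace.mp hGc.isCompact
  have := Measure.isProbabilityMeasure_map (μ := m) measurable_subtype_coe.aemeasurable
  obtain ⟨F, hFf⟩ := ContinuousMap.exists_restrict_eq hGc ⟨f, hf⟩
  obtain rfl : f = fun y : G => F y := funext fun y => (DFunLike.congr_fun hFf y).symm
  have hF : F ∈ timeAverageSubmodule (m.map Subtype.val)
      (ContinuousMap.const ℝ (x : UnitAddTorus (Fin n)) + linearFlow θ) := by
    rw [timeAverageSubmodule_eq_top_of_mFourier_mem _ _ (mFourier_mem_timeAverageSubmodule hG m x)]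
    exact Submodule.mem_top
  rwa [mem_timeAverageSubmodule, integral_map measurable_subtype_coe.aemeasurable
    F.continuous.aestronglyMeasurable] at hF
end

section
/- Let n ≥ 1, and let a_k ∈ ℂ and θ_k ∈ ℝ for 1 ≤ k ≤ n. Define f(x) = ∑_{k=1}^n a_k x^{iθ_k} for x > 0, where x^{iθ} = exp(iθ log x). If lim_{x→+∞} f(x) exists in ℂ, then f is constant on (0,∞). -/
open Filter

/-- There is a sequence `u m → ∞` along which all the exponentials
`exp(i θ_k u)` tend to `1` simultaneously. -/
lemma stmt_2_aux (n : ℕ) (θ : Fin n → ℝ) :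
    ∃ u : ℕ → ℝ, Tendsto u atTop atTop ∧
      ∀ k, Tendsto (fun m => Complex.exp (((u m * θ k : ℝ) : ℂ) * Complex.I))
        atTop (nhds 1) := by
  set φ : ℕ → (Fin n → ℂ) := fun j k => Complex.exp ((((j : ℝ) * θ k : ℝ) : ℂ) * Complex.I)
    with hφ
  have hmem : ∀ j, φ j ∈ Set.univ.pi fun _ : Fin n => Metric.sphere (0 : ℂ) 1 := by
    intro j k _
    simp only [φ, Set.mem_pi, Metric.mem_sphere, Complex.dist_eq, sub_zero,
      Complex.norm_exp_ofReal_mul_I]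
  have hcompact : IsCompact (Set.univ.pi fun _ : Fin n => Metric.sphere (0 : ℂ) 1) :=
    isCompact_univ_pi fun _ => isCompact_sphere _ _
  obtain ⟨v, hv, ψ, hψmono, hψlim⟩ := hcompact.tendsto_subseq hmem
  have hvk : ∀ k, v k ≠ 0 := by
    intro k
    have : v k ∈ Metric.sphere (0 : ℂ) 1 := hv k (Set.mem_univ k)
    simp only [Metric.mem_sphere, Complex.dist_eq, sub_zero] at this
    intro h0
    rw [h0] at this
    simp at this
  have step : ∀ a b : ℕ, ψ a + b ≤ ψ (a + b) := by
    intro a b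
    induction b with
    | zero => simp
    | succ b ih =>
      have h1 : ψ (a + b) < ψ (a + b + 1) := hψmono (by omega)
      have hrw : a + (b + 1) = a + b + 1 := by ring
      rw [hrw]
      omega
  have hcomp : ∀ k, Tendsto (fun m => φ (ψ m) k) atTop (nhds (v k)) := by
    intro k
    exact (tendsto_pi_nhds.mp hψlim) k
  have h2m : Tendsto (fun m : ℕ => 2 * m) atTop atTop :=
    tendsto_atTop_atTop.mpr fun b => ⟨b, fun a ha => by omega⟩
  have hcomp2 : ∀ k, Tendsto (fun m => φ (ψ (2 * m)) k) atTop (nhds (v k)) :=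
    fun k => (hcomp k).comp h2m
  refine ⟨fun m => (ψ (2 * m) : ℝ) - ψ m, ?_, ?_⟩
  · apply tendsto_atTop_mono (f := fun m : ℕ => (m : ℝ))
    · intro m
      have := step m m
      have h2 : ψ m + m ≤ ψ (2 * m) := by
        rw [two_mul]; exact step m m
      have : (m : ℝ) + (ψ m : ℝ) ≤ (ψ (2 * m) : ℝ) := by exact_mod_cast by omega
      linarith
    · exact tendsto_natCast_atTop_atTop
  · intro k
    have heq : ∀ m, Complex.exp (((((ψ (2 * m) : ℝ) - ψ m) * θ k : ℝ) : ℂ) * Complex.I)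
        = φ (ψ (2 * m)) k / φ (ψ m) k := by
      intro m
      simp only [φ]
      rw [← Complex.exp_sub]
      congr 1
      push_cast
      ring
    have hdiv : Tendsto (fun m => φ (ψ (2 * m)) k / φ (ψ m) k) atTop
        (nhds (v k / v k)) := (hcomp2 k).div (hcomp k) (hvk k)
    rw [div_self (hvk k)] at hdiv
    exact hdiv.congr fun m => (heq m).symm

/-- If `f(x) = ∑_{k=1}^n a_k x^{iθ_k}` has a limit as `x → +∞`, then `f` is constant
on `(0, ∞)`. -/
theorem stmt_2 (n : ℕ) (hn : 1 ≤ n) (a : Fin n → ℂ) (θ : Fin n → ℝ) (L : ℂ)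
    (h : Tendsto (fun x : ℝ => ∑ k, a k * (x : ℂ) ^ (Complex.I * (θ k : ℂ)))
      atTop (nhds L)) :
    ∀ x y : ℝ, 0 < x → 0 < y →
      (∑ k, a k * (x : ℂ) ^ (Complex.I * (θ k : ℂ)))
        = ∑ k, a k * (y : ℂ) ^ (Complex.I * (θ k : ℂ)) := by
  set g : ℝ → ℂ := fun t => ∑ k, a k * Complex.exp (((t * θ k : ℝ) : ℂ) * Complex.I)
    with hg_def
  have hfg : ∀ z : ℝ, 0 < z →
      (∑ k, a k * (z : ℂ) ^ (Complex.I * (θ k : ℂ))) = g (Real.log z) := by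
    intro z hz
    refine Finset.sum_congr rfl fun k _ => ?_
    rw [Complex.cpow_def_of_ne_zero (by exact_mod_cast hz.ne')]
    rw [← Complex.ofReal_log hz.le]
    congr 1
    push_cast
    ring
  have hg : Tendsto g atTop (nhds L) := by
    have hcomp := h.comp Real.tendsto_exp_atTop
    refine hcomp.congr fun t => ?_
    show (∑ k, a k * ((Real.exp t : ℝ) : ℂ) ^ (Complex.I * (θ k : ℂ))) = g t
    rw [hfg _ (Real.exp_pos t), Real.log_exp]
  obtain ⟨u, hu, huk⟩ := stmt_2_aux n θ
  have hconst : ∀ z : ℝ, 0 < z →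
      (∑ k, a k * (z : ℂ) ^ (Complex.I * (θ k : ℂ))) = L := by
    intro z hz
    have h1 : Tendsto (fun m => g (Real.log z + u m)) atTop (nhds (g (Real.log z))) := by
      have hterm : ∀ m, g (Real.log z + u m)
          = ∑ k, (a k * Complex.exp (((Real.log z * θ k : ℝ) : ℂ) * Complex.I))
              * Complex.exp (((u m * θ k : ℝ) : ℂ) * Complex.I) := by
        intro m
        refine Finset.sum_congr rfl fun k _ => ?_
        rw [mul_assoc, ← Complex.exp_add]
        congr 2
        push_cast
        ring
      have hlim : Tendsto (fun m =>
          ∑ k, (a k * Complex.exp (((Real.log z * θ k : ℝ) : ℂ) * Complex.I))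
            * Complex.exp (((u m * θ k : ℝ) : ℂ) * Complex.I)) atTop
          (nhds (∑ k, (a k * Complex.exp (((Real.log z * θ k : ℝ) : ℂ) * Complex.I)) * 1)) :=
        tendsto_finset_sum _ fun k _ => tendsto_const_nhds.mul (huk k)
      simp only [mul_one] at hlim
      exact (hlim.congr fun m => (hterm m).symm)
    have h2 : Tendsto (fun m => g (Real.log z + u m)) atTop (nhds L) :=
      hg.comp (tendsto_atTop_add_const_left atTop (Real.log z) hu)
    have := tendsto_nhds_unique h1 h2
    rw [hfg z hz, this]
  intro x y hx hy
  rw [hconst x hx, hconst y hy]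
end

section
/- Let χ : ℝ^× → ℂ be a continuous group homomorphism with |χ(t)| = 1 for all t ≠ 0, let s ∈ ℂ, and let N ∈ ℕ. Then there exist a constant C > 0 and a finite family of Schwartz seminorms on 𝓢(ℝ²) with maximum S* such that for every Φ ∈ 𝓢(ℝ²) and every y ∈ ℝ with |y| ≥ 1, the integral I(y) = ∫_{ℝ∖{0}} Φ(t, y/t) χ(t) |t|^{2s} dt/|t| converges absolutely and satisfies |I(y)| ≤ C · S*(Φ) · |y|^{-N}. -/
/-!
On the curve `x = (t, y / t)` both `|t|` and `|y / t|` are at most `‖x‖`, and `|y| = |t| |y / t|`.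
Trading `|y|^N` for a larger power `|y|^m` (as `|y| ≥ 1`) that also absorbs the possibly negative
power `|t|^(Re 2s - 1)`, the weight `|t|^(Re 2s - 1) |y|^N (1 + |t|)^2` is bounded by a fixed
power `(1 + ‖x‖)^k`. Since `(1 + ‖x‖)^k ‖Φ x‖ ≤ 2^k S(Φ)`, with `S` the sup of the seminorms of
order `≤ (k, 0)`, the integrand is at most `2^k S(Φ) |y|^(-N) (1 + |t|)^(-2)`, which is integrable.
-/

open MeasureTheory

open Real in
theorem abs_rpow_mul_rpow_mul_sq_le_one_add_norm_pow {t y σ N m : ℝ} {k : ℕ} (ht : t ≠ 0)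
    (hy : 1 ≤ |y|) (hN : 0 ≤ N) (hNm : N ≤ m) (hm : 0 ≤ σ - 1 + m) (hk : σ + 1 + 2 * m ≤ k) :
    |t| ^ (σ - 1) * |y| ^ N * (1 + |t|) ^ 2 ≤ (1 + ‖(t, y / t)‖) ^ k := by
  set r := 1 + ‖(t, y / t)‖
  have hr : 1 ≤ r := le_add_of_nonneg_right (norm_nonneg _)
  have hnorm := norm_prod_le_iff.mp (le_refl ‖(t, y / t)‖)
  have hm' : 0 ≤ m := hN.trans hNm
  calc |t| ^ (σ - 1) * |y| ^ N * (1 + |t|) ^ 2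
      ≤ |t| ^ (σ - 1) * |y| ^ m * (1 + |t|) ^ 2 := by gcongr
    _ = |t| ^ (σ - 1 + m) * |y / t| ^ m * (1 + |t|) ^ 2 := by
        rw [abs_div, div_rpow (abs_nonneg y) (abs_nonneg t), rpow_add (abs_pos.mpr ht)]
        field_simp
    _ ≤ r ^ (σ - 1 + m) * r ^ m * r ^ 2 := by
        gcongr
        · exact hnorm.1.trans (by simp [r])
        · exact hnorm.2.trans (by simp [r])
        · simp [r]
    _ = r ^ (σ + 1 + 2 * m) := by
        rw [← rpow_natCast, ← rpow_add (by positivity), ← rpow_add (by positivity)]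
        ring_nf
    _ ≤ r ^ k := by
        rw [← rpow_natCast]; exact rpow_le_rpow_of_exponent_le hr hk

theorem integrableOn_and_norm_setIntegral_le_of_norm_le_mul_one_add_norm_rpow
    {E : Type*} [NormedAddCommGroup E] [NormedSpace ℝ E] {f : ℝ → E} {s : Set ℝ}
    (hs : MeasurableSet s) (hf : AEStronglyMeasurable f (volume.restrict s)) {M : ℝ}
    (hM : 0 ≤ M) (hbound : ∀ t ∈ s, ‖f t‖ ≤ M * (1 + ‖t‖) ^ (-2 : ℝ)) :
    IntegrableOn f s ∧ ‖∫ t in s, f t‖ ≤ M * ∫ t : ℝ, (1 + ‖t‖) ^ (-2 : ℝ) := by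
  have hg : Integrable fun t : ℝ => M * (1 + ‖t‖) ^ (-2 : ℝ) :=
    (integrable_one_add_norm (E := ℝ) (by simp)).const_mul M
  have hbound_ae : ∀ᵐ t ∂volume.restrict s, ‖f t‖ ≤ M * (1 + ‖t‖) ^ (-2 : ℝ) :=
    (ae_restrict_iff' hs).2 (.of_forall hbound)
  refine ⟨hg.integrableOn.mono' hf hbound_ae, ?_⟩
  calc ‖∫ t in s, f t‖ ≤ ∫ t in s, M * (1 + ‖t‖) ^ (-2 : ℝ) :=
        norm_integral_le_of_norm_le hg.integrableOn hbound_ae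
    _ ≤ ∫ t, M * (1 + ‖t‖) ^ (-2 : ℝ) :=
        setIntegral_le_integral hg (.of_forall fun t => by positivity)
    _ = M * ∫ t : ℝ, (1 + ‖t‖) ^ (-2 : ℝ) := integral_const_mul M _

noncomputable def twistedIntegrand (Φ : SchwartzMap (ℝ × ℝ) ℂ) (χ : ℝ → ℂ) (s : ℂ) (y t : ℝ) : ℂ :=
  Φ (t, y / t) * χ t * ((|t| : ℝ) : ℂ) ^ (2 * s) / ((|t| : ℝ) : ℂ)

theorem continuousOn_twistedIntegrand (Φ : SchwartzMap (ℝ × ℝ) ℂ) {χ : ℝ → ℂ}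
    (hχ : ContinuousOn χ {t : ℝ | t ≠ 0}) (s : ℂ) (y : ℝ) :
    ContinuousOn (twistedIntegrand Φ χ s y) {0}ᶜ := by
  have habs : Continuous fun t : ℝ => ((|t| : ℝ) : ℂ) := by fun_prop
  refine ContinuousOn.div ?_ habs.continuousOn fun t ht => by simpa using ht
  refine ContinuousOn.mul (Φ.continuous.comp_continuousOn ?_ |>.mul hχ) fun t ht => ?_
  · exact continuousOn_id.prodMk (continuousOn_const.div continuousOn_id fun t ht => ht)
  · exact (habs.continuousAt.cpow continuousAt_const
      (Complex.ofReal_mem_slitPlane.2 (abs_pos.mpr ht))).continuousWithinAt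

theorem norm_twistedIntegrand (Φ : SchwartzMap (ℝ × ℝ) ℂ) {χ : ℝ → ℂ} {t : ℝ} (ht : t ≠ 0)
    (hχ : ‖χ t‖ = 1) (s : ℂ) (y : ℝ) :
    ‖twistedIntegrand Φ χ s y t‖ = ‖Φ (t, y / t)‖ * |t| ^ ((2 * s).re - 1) := by
  have ht' : 0 < |t| := abs_pos.mpr ht
  rw [twistedIntegrand, norm_div, norm_mul, norm_mul, hχ, Complex.norm_cpow_eq_rpow_re_of_pos ht',
    Complex.norm_real, Real.norm_eq_abs, abs_abs, Real.rpow_sub_one ht'.ne']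
  ring

theorem norm_twistedIntegrand_le (Φ : SchwartzMap (ℝ × ℝ) ℂ) {χ : ℝ → ℂ}
    (hχ : ∀ t : ℝ, t ≠ 0 → ‖χ t‖ = 1) (s : ℂ) {N m : ℝ} {k : ℕ} (hN : 0 ≤ N) (hNm : N ≤ m)
    (hm : 0 ≤ (2 * s).re - 1 + m) (hk : (2 * s).re + 1 + 2 * m ≤ k) {y t : ℝ} (hy : 1 ≤ |y|)
    (ht : t ≠ 0) :
    ‖twistedIntegrand Φ χ s y t‖ ≤
      2 ^ k * (Finset.Iic (k, 0)).sup (fun kn => SchwartzMap.seminorm ℝ kn.1 kn.2) Φ *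
        |y| ^ (-N) * (1 + ‖t‖) ^ (-2 : ℝ) := by
  set σ := (2 * s).re
  have hweight := abs_rpow_mul_rpow_mul_sq_le_one_add_norm_pow ht hy hN hNm hm hk
  have hΦ : (1 + ‖(t, y / t)‖) ^ k * ‖Φ (t, y / t)‖ ≤
      2 ^ k * (Finset.Iic (k, 0)).sup (fun kn => SchwartzMap.seminorm ℝ kn.1 kn.2) Φ := by
    simpa using SchwartzMap.one_add_le_sup_seminorm_apply (𝕜 := ℝ) (m := (k, 0)) le_rfl le_rfl Φ
      (t, y / t)
  have hy0 : 0 < |y| := one_pos.trans_le hy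
  rw [norm_twistedIntegrand Φ ht (hχ t ht), Real.norm_eq_abs]
  calc ‖Φ (t, y / t)‖ * |t| ^ (σ - 1)
      = ‖Φ (t, y / t)‖ * (|t| ^ (σ - 1) * |y| ^ N * (1 + |t|) ^ 2) *
          (|y| ^ (-N) * (1 + |t|) ^ (-2 : ℝ)) := by
        rw [Real.rpow_neg hy0.le, Real.rpow_neg (by positivity), Real.rpow_two]
        field_simp
    _ ≤ ‖Φ (t, y / t)‖ * (1 + ‖(t, y / t)‖) ^ k * (|y| ^ (-N) * (1 + |t|) ^ (-2 : ℝ)) := by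
        gcongr
    _ ≤ _ := by
        rw [mul_comm ‖_‖, mul_assoc _ (|y| ^ (-N))]
        gcongr

theorem stmt_5_general (χ : ℝ → ℂ)
    (hχcont : ContinuousOn χ {t : ℝ | t ≠ 0})
    (hχunit : ∀ t : ℝ, t ≠ 0 → ‖χ t‖ = 1)
    (s : ℂ) (N : ℕ) :
    ∃ (C : ℝ) (F : Finset (ℕ × ℕ)), 0 < C ∧
      ∀ (Φ : SchwartzMap (ℝ × ℝ) ℂ) (y : ℝ), 1 ≤ |y| →
        IntegrableOn
          (fun t : ℝ => Φ (t, y / t) * χ t * ((|t| : ℝ) : ℂ) ^ (2 * s) / ((|t| : ℝ) : ℂ))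
          {(0:ℝ)}ᶜ ∧
        ‖∫ t in {(0:ℝ)}ᶜ,
            Φ (t, y / t) * χ t * ((|t| : ℝ) : ℂ) ^ (2 * s) / ((|t| : ℝ) : ℂ)‖
          ≤ C * ((F.sup fun kn => SchwartzMap.seminorm ℝ kn.1 kn.2) Φ) * |y| ^ (-(N : ℝ)) := by
  set σ := (2 * s).re
  obtain ⟨m, hNm, hm⟩ : ∃ m : ℕ, N ≤ m ∧ 0 ≤ σ - 1 + m :=
    ⟨N + ⌈1 - σ⌉₊, by omega, by push_cast; linarith [Nat.le_ceil (1 - σ), N.cast_nonneg (α := ℝ)]⟩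
  set k := ⌈σ + 1 + 2 * (m : ℝ)⌉₊
  set I := ∫ t : ℝ, (1 + ‖t‖) ^ (-2 : ℝ)
  have hI : 0 ≤ I := integral_nonneg fun t => by positivity
  refine ⟨2 ^ k * (I + 1), Finset.Iic (k, 0), by positivity, fun Φ y hy => ?_⟩
  set S := (Finset.Iic (k, 0)).sup (fun kn => SchwartzMap.seminorm ℝ kn.1 kn.2) Φ
  have hM : 0 ≤ 2 ^ k * S * |y| ^ (-(N : ℝ)) := by positivity
  obtain ⟨hint, hle⟩ := integrableOn_and_norm_setIntegral_le_of_norm_le_mul_one_add_norm_rpow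
    isOpen_compl_singleton.measurableSet
    ((continuousOn_twistedIntegrand Φ hχcont s y).aestronglyMeasurable
      isOpen_compl_singleton.measurableSet) hM
    fun t ht => norm_twistedIntegrand_le Φ hχunit s N.cast_nonneg (Nat.cast_le.mpr hNm) hm
      (Nat.le_ceil _) hy ht
  refine ⟨hint, hle.trans ?_⟩
  calc 2 ^ k * S * |y| ^ (-(N : ℝ)) * I ≤ 2 ^ k * S * |y| ^ (-(N : ℝ)) * (I + 1) := by gcongr; simp
    _ = 2 ^ k * (I + 1) * S * |y| ^ (-(N : ℝ)) := by ring

/-- Rapid decay, as `|y| → ∞`, of `∫_{ℝ^×} Φ(t, y/t) χ(t) |t|^{2s} dt/|t|` for a Schwartz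
function `Φ` on `ℝ²` and a unitary character `χ` of `ℝ^×`, with constants controlled by
finitely many Schwartz seminorms of `Φ`. -/
theorem stmt_5 (χ : ℝ → ℂ)
    (hχmul : ∀ t u : ℝ, t ≠ 0 → u ≠ 0 → χ (t * u) = χ t * χ u)
    (hχcont : ContinuousOn χ {t : ℝ | t ≠ 0})
    (hχunit : ∀ t : ℝ, t ≠ 0 → ‖χ t‖ = 1)
    (s : ℂ) (N : ℕ) :
    ∃ (C : ℝ) (F : Finset (ℕ × ℕ)), 0 < C ∧
      ∀ (Φ : SchwartzMap (ℝ × ℝ) ℂ) (y : ℝ), 1 ≤ |y| →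
        IntegrableOn
          (fun t : ℝ => Φ (t, y / t) * χ t * ((|t| : ℝ) : ℂ) ^ (2 * s) / ((|t| : ℝ) : ℂ))
          {(0:ℝ)}ᶜ ∧
        ‖∫ t in {(0:ℝ)}ᶜ,
            Φ (t, y / t) * χ t * ((|t| : ℝ) : ℂ) ^ (2 * s) / ((|t| : ℝ) : ℂ)‖
          ≤ C * ((F.sup fun kn => SchwartzMap.seminorm ℝ kn.1 kn.2) Φ) * |y| ^ (-(N : ℝ)) :=
  stmt_5_general χ hχcont hχunit s N
end

section
/- Let c ∈ ℝ, f ∈ B_c(ℝ₊), k ∈ ℕ, l ∈ [1,∞), and let σ, ε ∈ ℝ with ε > 0 and σ − ε > c. Then there is a constant C > 0 depending only on ε and l such that B_l^{k,σ}(f) ≤ C · (B_∞^{k,σ+ε}(f) + B_∞^{k,σ−ε}(f)). -/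
open MeasureTheory Set
open scoped ENNReal

/-- The seminorm `B_l^{k,σ}(f) = (∫_0^∞ |f^{(k)}(y) y^{σ+k}|^l dy/y)^{1/l}` (valued in
`ℝ≥0∞`), for functions on `(0,∞)`. -/
noncomputable def BlNorm (f : ℝ → ℂ) (k : ℕ) (σ : ℝ) (l : ℝ) : ℝ≥0∞ :=
  (∫⁻ y in Ioi (0:ℝ),
      (ENNReal.ofReal (‖iteratedDerivWithin k f (Ioi 0) y‖ * y ^ (σ + (k:ℝ)))) ^ l
        / ENNReal.ofReal y) ^ (1/l)

/-- The seminorm `B_∞^{k,σ}(f) = sup_{y>0} |f^{(k)}(y) y^{σ+k}|` (valued in `ℝ≥0∞`). -/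
noncomputable def BinfNorm (f : ℝ → ℂ) (k : ℕ) (σ : ℝ) : ℝ≥0∞ :=
  ⨆ y ∈ Ioi (0:ℝ), ENNReal.ofReal (‖iteratedDerivWithin k f (Ioi 0) y‖ * y ^ (σ + (k:ℝ)))

lemma lint_Ioc_rpow {a : ℝ} (ha : 0 < a) :
    ∫⁻ y in Ioc (0:ℝ) 1, ENNReal.ofReal (y ^ (a - 1)) = ENNReal.ofReal (1 / a) := by
  rw [← ofReal_integral_eq_lintegral_ofReal]
  · congr 1
    rw [← intervalIntegral.integral_of_le zero_le_one,
      integral_rpow (Or.inl (by linarith : (-1:ℝ) < a - 1))]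
    rw [Real.one_rpow, Real.zero_rpow (by linarith : a - 1 + 1 ≠ 0)]
    rw [sub_add_cancel]
    ring
  · exact (intervalIntegral.intervalIntegrable_rpow' (by linarith)).1
  · filter_upwards [ae_restrict_mem measurableSet_Ioc] with y hy
    exact Real.rpow_nonneg hy.1.le _

lemma lint_Ioi_rpow {a : ℝ} (ha : 0 < a) :
    ∫⁻ y in Ioi (1:ℝ), ENNReal.ofReal (y ^ (-a - 1)) = ENNReal.ofReal (1 / a) := by
  rw [← ofReal_integral_eq_lintegral_ofReal]
  · congr 1
    rw [integral_Ioi_rpow_of_lt (by linarith) one_pos]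
    rw [Real.one_rpow]
    field_simp
    rw [sub_add_cancel, div_neg, neg_neg, div_self ha.ne']
  · exact integrableOn_Ioi_rpow_of_lt (by linarith) one_pos
  · filter_upwards [ae_restrict_mem measurableSet_Ioi] with y hy
    exact Real.rpow_nonneg (by linarith [mem_Ioi.1 hy] : (0:ℝ) ≤ y) _

/-- For `f ∈ B_c(ℝ₊)`, `k ∈ ℕ`, `l ∈ [1,∞)` and `σ - ε > c` with `ε > 0`, one has
`B_l^{k,σ}(f) ≤ C (B_∞^{k,σ+ε}(f) + B_∞^{k,σ-ε}(f))` with `C` depending only on `ε, l`. -/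
theorem stmt_7 (l ε : ℝ) (hl : 1 ≤ l) (hε : 0 < ε) :
    ∃ C : ℝ≥0∞, 0 < C ∧ C ≠ ⊤ ∧
      ∀ (c : ℝ) (f : ℝ → ℂ), ContDiffOn ℝ (⊤ : ℕ∞) f (Ioi 0) →
        (∀ (k : ℕ) (σ : ℝ), c < σ → BinfNorm f k σ ≠ ⊤) →
        ∀ (k : ℕ) (σ : ℝ), c < σ - ε →
          BlNorm f k σ l ≤ C * (BinfNorm f k (σ + ε) + BinfNorm f k (σ - ε)) := by
  have hl0 : (0:ℝ) < l := lt_of_lt_of_le one_pos hl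
  have hεl : (0:ℝ) < ε * l := mul_pos hε hl0
  refine ⟨(2 * ENNReal.ofReal (1 / (ε * l))) ^ (1/l), ?_, ?_, ?_⟩
  · refine ENNReal.rpow_pos (ENNReal.mul_pos (by norm_num) ?_) ?_
    · exact (ENNReal.ofReal_pos.2 (by positivity)).ne'
    · exact ENNReal.mul_ne_top (by norm_num) ENNReal.ofReal_ne_top
  · exact ENNReal.rpow_ne_top_of_nonneg (by positivity)
      (ENNReal.mul_ne_top (by norm_num) ENNReal.ofReal_ne_top)
  intro c f hf hfin k σ hσ
  set A := BinfNorm f k (σ + ε) with hAdef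
  set B := BinfNorm f k (σ - ε) with hBdef
  have hA : A ≠ ⊤ := hfin k (σ + ε) (by linarith)
  have hB : B ≠ ⊤ := hfin k (σ - ε) hσ
  set N : ℝ → ℝ := fun y => ‖iteratedDerivWithin k f (Ioi 0) y‖ with hN
  set F : ℝ → ℝ≥0∞ := fun y =>
    (ENNReal.ofReal (N y * y ^ (σ + (k:ℝ)))) ^ l / ENNReal.ofReal y with hF
  -- pointwise bounds
  have bound : ∀ (τ δ : ℝ), σ = τ + δ → ∀ y : ℝ, 0 < y →
      F y ≤ (BinfNorm f k τ) ^ l * ENNReal.ofReal (y ^ (δ * l - 1)) := by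
    intro τ δ hτδ y hy
    have h1 : N y * y ^ (σ + (k:ℝ)) = (N y * y ^ (τ + (k:ℝ))) * y ^ δ := by
      rw [mul_assoc, ← Real.rpow_add hy]
      ring_nf
      rw [hτδ]; ring_nf
    have h2 : ENNReal.ofReal (N y * y ^ (τ + (k:ℝ))) ≤ BinfNorm f k τ :=
      le_iSup₂ (f := fun (y : ℝ) (_ : y ∈ Ioi (0:ℝ)) =>
        ENNReal.ofReal (N y * y ^ (τ + (k:ℝ)))) y hy
    have h3 : ENNReal.ofReal (N y * y ^ (σ + (k:ℝ)))
        ≤ BinfNorm f k τ * ENNReal.ofReal (y ^ δ) := by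
      rw [h1, ENNReal.ofReal_mul (mul_nonneg (norm_nonneg _) (Real.rpow_nonneg hy.le _))]
      exact mul_le_mul_left h2 _
    calc F y ≤ (BinfNorm f k τ * ENNReal.ofReal (y ^ δ)) ^ l / ENNReal.ofReal y := by
          exact ENNReal.div_le_div_right (ENNReal.rpow_le_rpow h3 hl0.le) _
      _ = (BinfNorm f k τ) ^ l * (ENNReal.ofReal (y ^ (δ * l)) / ENNReal.ofReal y) := by
          rw [ENNReal.mul_rpow_of_nonneg _ _ hl0.le,
            ENNReal.ofReal_rpow_of_pos (Real.rpow_pos_of_pos hy δ),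
            ← Real.rpow_mul hy.le, mul_div_assoc]
      _ = (BinfNorm f k τ) ^ l * ENNReal.ofReal (y ^ (δ * l - 1)) := by
          rw [← ENNReal.ofReal_div_of_pos hy, Real.rpow_sub hy, Real.rpow_one]
  have hBl : (B:ℝ≥0∞) ^ l ≠ ⊤ := ENNReal.rpow_ne_top_of_nonneg hl0.le hB
  have hAl : (A:ℝ≥0∞) ^ l ≠ ⊤ := ENNReal.rpow_ne_top_of_nonneg hl0.le hA
  have hsplit : (∫⁻ y in Ioi (0:ℝ), F y)
      = (∫⁻ y in Ioc (0:ℝ) 1, F y) + ∫⁻ y in Ioi (1:ℝ), F y := by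
    rw [← lintegral_union measurableSet_Ioi (Ioc_disjoint_Ioi le_rfl),
      Ioc_union_Ioi_eq_Ioi zero_le_one]
  have hI1 : (∫⁻ y in Ioc (0:ℝ) 1, F y) ≤ B ^ l * ENNReal.ofReal (1 / (ε * l)) := by
    calc (∫⁻ y in Ioc (0:ℝ) 1, F y)
        ≤ ∫⁻ y in Ioc (0:ℝ) 1, B ^ l * ENNReal.ofReal (y ^ (ε * l - 1)) := by
          refine lintegral_mono_ae ?_
          filter_upwards [ae_restrict_mem measurableSet_Ioc] with y hy
          exact bound (σ - ε) ε (by ring) y hy.1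
      _ = B ^ l * ∫⁻ y in Ioc (0:ℝ) 1, ENNReal.ofReal (y ^ (ε * l - 1)) :=
          lintegral_const_mul' _ _ hBl
      _ = B ^ l * ENNReal.ofReal (1 / (ε * l)) := by rw [lint_Ioc_rpow hεl]
  have hI2 : (∫⁻ y in Ioi (1:ℝ), F y) ≤ A ^ l * ENNReal.ofReal (1 / (ε * l)) := by
    calc (∫⁻ y in Ioi (1:ℝ), F y)
        ≤ ∫⁻ y in Ioi (1:ℝ), A ^ l * ENNReal.ofReal (y ^ (-(ε * l) - 1)) := by
          refine lintegral_mono_ae ?_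
          filter_upwards [ae_restrict_mem measurableSet_Ioi] with y hy
          have := bound (σ + ε) (-ε) (by ring) y (lt_trans one_pos hy)
          simpa [neg_mul] using this
      _ = A ^ l * ∫⁻ y in Ioi (1:ℝ), ENNReal.ofReal (y ^ (-(ε * l) - 1)) :=
          lintegral_const_mul' _ _ hAl
      _ = A ^ l * ENNReal.ofReal (1 / (ε * l)) := by rw [lint_Ioi_rpow hεl]
  have htot : (∫⁻ y in Ioi (0:ℝ), F y)
      ≤ 2 * ENNReal.ofReal (1 / (ε * l)) * (A + B) ^ l := by
    rw [hsplit]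
    have hAle : A ^ l ≤ (A + B) ^ l := ENNReal.rpow_le_rpow le_self_add hl0.le
    have hBle : B ^ l ≤ (A + B) ^ l := ENNReal.rpow_le_rpow le_add_self hl0.le
    calc (∫⁻ y in Ioc (0:ℝ) 1, F y) + ∫⁻ y in Ioi (1:ℝ), F y
        ≤ B ^ l * ENNReal.ofReal (1 / (ε * l)) + A ^ l * ENNReal.ofReal (1 / (ε * l)) :=
          add_le_add hI1 hI2
      _ ≤ (A + B) ^ l * ENNReal.ofReal (1 / (ε * l))
            + (A + B) ^ l * ENNReal.ofReal (1 / (ε * l)) :=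
          add_le_add (mul_le_mul_left hBle _) (mul_le_mul_left hAle _)
      _ = 2 * ENNReal.ofReal (1 / (ε * l)) * (A + B) ^ l := by ring
  have : BlNorm f k σ l = (∫⁻ y in Ioi (0:ℝ), F y) ^ (1/l) := rfl
  rw [this]
  calc (∫⁻ y in Ioi (0:ℝ), F y) ^ (1/l)
      ≤ (2 * ENNReal.ofReal (1 / (ε * l)) * (A + B) ^ l) ^ (1/l) :=
        ENNReal.rpow_le_rpow htot (by positivity)
    _ = (2 * ENNReal.ofReal (1 / (ε * l))) ^ (1/l) * (A + B) := by
        rw [ENNReal.mul_rpow_of_nonneg _ _ (by positivity : (0:ℝ) ≤ 1/l),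
          ← ENNReal.rpow_mul, mul_one_div_cancel hl0.ne', ENNReal.rpow_one]
end

section
/- Let c ∈ ℝ, f ∈ B_c(ℝ₊), k ∈ ℕ, l ∈ [1,∞), and σ > c. Then there is a constant C > 0 depending only on l and σ + k such that B_∞^{k,σ}(f) ≤ C · (B_l^{k,σ}(f) + B_l^{k+1,σ}(f)). -/
open MeasureTheory Set
open scoped ENNReal

lemma aux_holder {s : Set ℝ} {l : ℝ} (hl : 1 ≤ l)
    {φ w : ℝ → ℝ≥0∞} (hφ : AEMeasurable φ (volume.restrict s)) (hw : Measurable w)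
    (hw0 : ∀ t ∈ s, w t ≠ 0) (hwt : ∀ t ∈ s, w t ≠ ⊤) (hs : MeasurableSet s)
    (hw1 : ∫⁻ t in s, w t ≤ 1) :
    ∫⁻ t in s, φ t * w t ≤ (∫⁻ t in s, φ t ^ l * w t) ^ (1/l) := by
  rcases eq_or_lt_of_le hl with h1 | h1
  · simp [← h1]
  have hl0 : l ≠ 0 := by linarith
  set q := Real.conjExponent l with hq
  have hpq : l.HolderConjugate q := Real.HolderConjugate.conjExponent h1
  have hq0 : q ≠ 0 := hpq.symm.ne_zero
  have key := ENNReal.lintegral_mul_le_Lp_mul_Lq (volume.restrict s) hpq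
    (f := fun t => φ t * w t ^ (1/l)) (g := fun t => w t ^ (1/q))
    (hφ.mul ((hw.pow_const _).aemeasurable)) ((hw.pow_const _).aemeasurable)
  have e1 : ∫⁻ t in s, (fun t => φ t * w t ^ (1/l)) t * (fun t => w t ^ (1/q)) t
      = ∫⁻ t in s, φ t * w t := by
    refine setLIntegral_congr_fun hs (fun t ht => ?_)
    rw [mul_assoc, ← ENNReal.rpow_add _ _ (hw0 t ht) (hwt t ht)]
    rw [one_div, one_div, hpq.inv_add_inv_eq_one, ENNReal.rpow_one]
  have e2 : ∫⁻ t in s, ((fun t => φ t * w t ^ (1/l)) t) ^ l = ∫⁻ t in s, φ t ^ l * w t := by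
    refine setLIntegral_congr_fun hs (fun t ht => ?_)
    rw [ENNReal.mul_rpow_of_nonneg _ _ (by linarith : (0:ℝ) ≤ l), ← ENNReal.rpow_mul,
      one_div_mul_cancel hl0, ENNReal.rpow_one]
  have e3 : ∫⁻ t in s, ((fun t => w t ^ (1/q)) t) ^ q = ∫⁻ t in s, w t := by
    refine setLIntegral_congr_fun hs (fun t ht => ?_)
    rw [← ENNReal.rpow_mul, one_div_mul_cancel hq0, ENNReal.rpow_one]
  simp only [Pi.mul_apply] at key
  rw [e1, e2, e3] at key
  refine key.trans ?_
  refine mul_le_of_le_one_right' (ENNReal.rpow_le_one hw1 ?_)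
  exact hpq.symm.one_div_nonneg

/-- For `f ∈ B_c(ℝ₊)`, `k ∈ ℕ`, `l ∈ [1,∞)` and `σ > c`, one has
`B_∞^{k,σ}(f) ≤ C (B_l^{k,σ}(f) + B_l^{k+1,σ}(f))` with `C` depending only on `l` and
`σ + k`. -/
theorem stmt_8 (l : ℝ) (hl : 1 ≤ l) (a : ℝ) :
    ∃ C : ℝ≥0∞, 0 < C ∧ C ≠ ⊤ ∧
      ∀ (c : ℝ) (f : ℝ → ℂ), ContDiffOn ℝ (⊤ : ℕ∞) f (Ioi 0) →
        (∀ (k : ℕ) (σ : ℝ), c < σ → BinfNorm f k σ ≠ ⊤) →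
        ∀ (k : ℕ) (σ : ℝ), c < σ → σ + (k:ℝ) = a →
          BinfNorm f k σ ≤ C * (BlNorm f k σ l + BlNorm f (k+1) σ l) := by
  have hl0 : (0:ℝ) < l := by linarith
  refine ⟨2 + ENNReal.ofReal |a|, by norm_num, ?_, ?_⟩
  · exact ENNReal.add_ne_top.mpr ⟨by norm_num, ENNReal.ofReal_ne_top⟩
  intro c f hf _hfin k σ hσ hka
  subst hka
  set A : ℝ := σ + (k:ℝ) with hA
  set cA : ℝ≥0∞ := ENNReal.ofReal |A| with hcA
  set G : ℝ → ℂ := iteratedDerivWithin k f (Ioi 0) with hG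
  set G' : ℝ → ℂ := iteratedDerivWithin (k+1) f (Ioi 0) with hG'
  have hGcont : ContinuousOn G (Ioi 0) :=
    hf.continuousOn_iteratedDerivWithin (by exact_mod_cast (le_top : ((k:ℕ):ℕ∞) ≤ ⊤)) (uniqueDiffOn_Ioi 0)
  have hG'cont : ContinuousOn G' (Ioi 0) :=
    hf.continuousOn_iteratedDerivWithin (by exact_mod_cast (le_top : ((k+1:ℕ):ℕ∞) ≤ ⊤)) (uniqueDiffOn_Ioi 0)
  have hGderiv : ∀ t ∈ Ioi (0:ℝ), HasDerivAt G (G' t) t := by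
    intro t ht
    have h1 : DifferentiableWithinAt ℝ G (Ioi 0) t :=
      hf.differentiableOn_iteratedDerivWithin (by exact_mod_cast (ENat.coe_lt_top k)) (uniqueDiffOn_Ioi 0) t ht
    have h3 := h1.hasDerivWithinAt.hasDerivAt (isOpen_Ioi.mem_nhds ht)
    rwa [hG', iteratedDerivWithin_succ]
  -- real weight functions
  set φ0 : ℝ → ℝ := fun t => ‖G t‖ * t ^ A with hφ0
  set φ1 : ℝ → ℝ := fun t => ‖G' t‖ * t ^ (A+1) with hφ1
  set Φ0 : ℝ → ℝ≥0∞ := fun t => ENNReal.ofReal (φ0 t) with hΦ0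
  set Φ1 : ℝ → ℝ≥0∞ := fun t => ENNReal.ofReal (φ1 t) with hΦ1
  set w : ℝ → ℝ≥0∞ := fun t => (ENNReal.ofReal t)⁻¹ with hwdef
  have hw : Measurable w := ENNReal.measurable_ofReal.inv
  set Bk : ℝ≥0∞ := BlNorm f k σ l with hBk
  set Bk1 : ℝ≥0∞ := BlNorm f (k+1) σ l with hBk1
  have hφ0cont : ContinuousOn φ0 (Ioi 0) := by
    refine hGcont.norm.mul ?_
    exact fun t ht => (Real.continuousAt_rpow_const t _ (Or.inl (ne_of_gt ht))).continuousWithinAt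
  have hφ1cont : ContinuousOn φ1 (Ioi 0) := by
    refine hG'cont.norm.mul ?_
    exact fun t ht => (Real.continuousAt_rpow_const t _ (Or.inl (ne_of_gt ht))).continuousWithinAt
  -- complex functions for FTC
  set F : ℝ → ℂ := fun t => G t * ((t ^ A : ℝ) : ℂ) with hF
  set F' : ℝ → ℂ := fun t => G' t * ((t ^ A : ℝ):ℂ) + G t * ((A * t ^ (A-1) : ℝ):ℂ) with hF'
  have hFderiv : ∀ t ∈ Ioi (0:ℝ), HasDerivAt F (F' t) t := by
    intro t ht
    exact (hGderiv t ht).mul ((Real.hasDerivAt_rpow_const (Or.inl (ne_of_gt ht))).ofReal_comp)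
  have hF'cont : ContinuousOn F' (Ioi 0) := by
    refine ContinuousOn.add (hG'cont.mul ?_) (hGcont.mul ?_)
    · exact Complex.continuous_ofReal.comp_continuousOn
        (fun t ht => (Real.continuousAt_rpow_const t _ (Or.inl (ne_of_gt ht))).continuousWithinAt)
    · exact Complex.continuous_ofReal.comp_continuousOn
        (continuousOn_const.mul
          (fun t ht => (Real.continuousAt_rpow_const t _ (Or.inl (ne_of_gt ht))).continuousWithinAt))
  have hnormF : ∀ t : ℝ, 0 < t → ‖F t‖ = φ0 t := by
    intro t ht
    rw [hF]
    simp only [norm_mul, Complex.norm_real, Real.norm_eq_abs,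
      abs_of_nonneg (Real.rpow_nonneg ht.le _)]
    rfl
  -- raw integrals vs BlNorm
  have hBkraw : Bk = (∫⁻ y in Ioi (0:ℝ), (Φ0 y) ^ l / ENNReal.ofReal y) ^ (1/l) := by
    rw [hBk, BlNorm]
  have hBk1raw : Bk1 = (∫⁻ y in Ioi (0:ℝ), (Φ1 y) ^ l / ENNReal.ofReal y) ^ (1/l) := by
    have he : σ + (((k+1):ℕ):ℝ) = A + 1 := by push_cast; ring
    rw [hBk1, BlNorm]
    simp only [he, hΦ1, hφ1, hG']
  rw [BinfNorm]
  refine iSup₂_le fun x hx => ?_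
  have hx0 : (0:ℝ) < x := hx
  have hxlt : x < 2*x := by linarith
  set s : Set ℝ := Ioo x (2*x) with hs
  have hsub : s ⊆ Ioi 0 := fun t ht => lt_trans hx0 ht.1
  have hsne : s.Nonempty := nonempty_Ioo.2 hxlt
  haveI : Nonempty ↥s := hsne.to_subtype
  -- measurability on s
  have hΦ0meas : AEMeasurable Φ0 (volume.restrict s) :=
    ENNReal.measurable_ofReal.comp_aemeasurable
      ((hφ0cont.mono hsub).aemeasurable measurableSet_Ioo)
  have hΦ1meas : AEMeasurable Φ1 (volume.restrict s) :=
    ENNReal.measurable_ofReal.comp_aemeasurable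
      ((hφ1cont.mono hsub).aemeasurable measurableSet_Ioo)
  have hw0 : ∀ t ∈ s, w t ≠ 0 := by
    intro t ht
    exact ENNReal.inv_ne_zero.mpr ENNReal.ofReal_ne_top
  have hwt : ∀ t ∈ s, w t ≠ ⊤ := by
    intro t ht
    have ht0 : (0:ℝ) < t := hsub ht
    exact ENNReal.inv_ne_top.mpr (ne_of_gt (ENNReal.ofReal_pos.2 ht0))
  have hw1 : ∫⁻ t in s, w t ≤ 1 := by
    have h1 : ∫⁻ t in s, w t ≤ ∫⁻ _ in s, (ENNReal.ofReal x)⁻¹ := by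
      refine setLIntegral_mono measurable_const fun t ht => ?_
      exact ENNReal.inv_le_inv' (ENNReal.ofReal_le_ofReal ht.1.le)
    refine h1.trans ?_
    rw [setLIntegral_const, hs, Real.volume_Ioo, show 2*x - x = x by ring]
    rw [ENNReal.inv_mul_cancel (by simpa using hx0) ENNReal.ofReal_ne_top]
  have hwhalf : ENNReal.ofReal (1/2) ≤ ∫⁻ t in s, w t := by
    have h1 : ∫⁻ _ in s, ((ENNReal.ofReal (2*x))⁻¹ : ℝ≥0∞) ≤ ∫⁻ t in s, w t := by
      refine setLIntegral_mono hw fun t ht => ?_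
      exact ENNReal.inv_le_inv' (ENNReal.ofReal_le_ofReal ht.2.le)
    refine le_trans ?_ h1
    rw [setLIntegral_const, hs, Real.volume_Ioo, show 2*x - x = x by ring]
    rw [← ENNReal.ofReal_inv_of_pos (by linarith), ← ENNReal.ofReal_mul (by positivity)]
    refine ENNReal.ofReal_le_ofReal ?_
    rw [inv_mul_eq_div]
    rw [div_le_div_iff₀ (by norm_num) (by linarith)]
    linarith
  -- bounds for set integrals via Hölder
  have hset0 : ∫⁻ t in s, Φ0 t * w t ≤ Bk := by
    refine (aux_holder hl hΦ0meas hw hw0 hwt measurableSet_Ioo hw1).trans ?_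
    rw [hBkraw]
    refine ENNReal.rpow_le_rpow ?_ (by positivity)
    refine le_trans (le_of_eq ?_) (lintegral_mono_set hsub)
    refine setLIntegral_congr_fun measurableSet_Ioo (fun t ht => ?_)
    rw [div_eq_mul_inv]
  have hset1 : ∫⁻ t in s, Φ1 t * w t ≤ Bk1 := by
    refine (aux_holder hl hΦ1meas hw hw0 hwt measurableSet_Ioo hw1).trans ?_
    rw [hBk1raw]
    refine ENNReal.rpow_le_rpow ?_ (by positivity)
    refine le_trans (le_of_eq ?_) (lintegral_mono_set hsub)
    refine setLIntegral_congr_fun measurableSet_Ioo (fun t ht => ?_)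
    rw [div_eq_mul_inv]
  -- the derivative-integral term
  set D : ℝ≥0∞ := ∫⁻ t in s, ENNReal.ofReal ‖F' t‖ with hD
  have hDle : D ≤ Bk1 + cA * Bk := by
    have hpt : ∀ t ∈ s, ENNReal.ofReal ‖F' t‖ ≤ Φ1 t * w t + cA * (Φ0 t * w t) := by
      intro t ht
      have ht0 : 0 < t := hsub ht
      have e1 : ‖F' t‖ ≤ φ1 t * t⁻¹ + |A| * (φ0 t * t⁻¹) := by
        have e2 : φ1 t * t⁻¹ = ‖G' t‖ * t ^ A := by
          rw [hφ1]
          simp only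
          rw [Real.rpow_add_one (ne_of_gt ht0)]
          field_simp
        have e3 : φ0 t * t⁻¹ = ‖G t‖ * t ^ (A-1) := by
          rw [hφ0]
          simp only
          rw [Real.rpow_sub_one (ne_of_gt ht0)]
          field_simp
        rw [e2, e3, hF']
        refine (norm_add_le _ _).trans (le_of_eq ?_)
        simp only [norm_mul, Complex.norm_real, Real.norm_eq_abs,
          abs_of_nonneg (Real.rpow_nonneg ht0.le _), abs_mul]
        ring
      refine le_trans (ENNReal.ofReal_le_ofReal e1) ?_
      refine le_trans (ENNReal.ofReal_add_le) ?_
      have hwt' : ENNReal.ofReal t⁻¹ = w t := (ENNReal.ofReal_inv_of_pos ht0)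
      have hφ0nn : 0 ≤ φ0 t := mul_nonneg (norm_nonneg _) (Real.rpow_nonneg ht0.le _)
      have hφ1nn : 0 ≤ φ1 t := mul_nonneg (norm_nonneg _) (Real.rpow_nonneg ht0.le _)
      gcongr
      · rw [← hwt', ← ENNReal.ofReal_mul hφ1nn]
      · rw [← hwt', ENNReal.ofReal_mul (abs_nonneg _), ENNReal.ofReal_mul hφ0nn]
    have h2 : D ≤ ∫⁻ t in s, (Φ1 t * w t + cA * (Φ0 t * w t)) := by
      rw [hD]
      refine lintegral_mono_ae ?_
      rw [ae_restrict_iff' measurableSet_Ioo]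
      exact Filter.Eventually.of_forall hpt
    refine h2.trans ?_
    rw [lintegral_add_left' (f := fun t => Φ1 t * w t) (hΦ1meas.mul hw.aemeasurable) _,
      lintegral_const_mul' cA _ ENNReal.ofReal_ne_top]
    exact add_le_add hset1 (mul_le_mul_right hset0 cA)
  -- step A : pointwise FTC bound
  have hstepA : ∀ y ∈ s, ENNReal.ofReal (φ0 x) ≤ Φ0 y + D := by
    intro y hy
    have hxy : x ≤ y := hy.1.le
    have huIcc : uIcc x (2*x) ⊆ Ioi 0 := by
      rw [uIcc_of_le hxlt.le]
      exact fun t ht => lt_of_lt_of_le hx0 ht.1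
    have huIcc' : uIcc x y ⊆ Ioi 0 := by
      rw [uIcc_of_le hxy]
      refine subset_trans (Icc_subset_Icc le_rfl hy.2.le) ?_
      rw [← uIcc_of_le hxlt.le]; exact huIcc
    have hint : IntervalIntegrable F' volume x y :=
      (hF'cont.mono huIcc').intervalIntegrable
    have hint2 : IntervalIntegrable (fun t => ‖F' t‖) volume x (2*x) :=
      ((hF'cont.norm).mono huIcc).intervalIntegrable
    have hFTC := intervalIntegral.integral_eq_sub_of_hasDerivAt
      (fun t ht => hFderiv t (huIcc' ht)) hint
    have h1 : ‖F x‖ ≤ ‖F y‖ + ∫ t in x..y, ‖F' t‖ := by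
      have h2 : ‖F y - F x‖ ≤ ∫ t in x..y, ‖F' t‖ := by
        rw [← hFTC]
        exact intervalIntegral.norm_integral_le_integral_norm hxy
      have h3 := norm_sub_norm_le (F x) (F y)
      rw [norm_sub_rev (F x) (F y)] at h3
      linarith
    have h4 : (∫ t in x..y, ‖F' t‖) ≤ ∫ t in x..2*x, ‖F' t‖ := by
      refine intervalIntegral.integral_mono_interval le_rfl hxy hy.2.le ?_ hint2
      exact Filter.Eventually.of_forall fun t => norm_nonneg _
    have h5 : ENNReal.ofReal (∫ t in x..2*x, ‖F' t‖) = D := by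
      rw [intervalIntegral.integral_of_le hxlt.le, hD]
      rw [MeasureTheory.ofReal_integral_eq_lintegral_ofReal
        (hint2.1) (Filter.Eventually.of_forall fun t => norm_nonneg _)]
      exact (setLIntegral_congr Ioo_ae_eq_Ioc).symm
    calc ENNReal.ofReal (φ0 x) = ENNReal.ofReal ‖F x‖ := by rw [hnormF x hx0]
      _ ≤ ENNReal.ofReal (‖F y‖ + ∫ t in x..2*x, ‖F' t‖) := by
          refine ENNReal.ofReal_le_ofReal ?_
          linarith
      _ ≤ ENNReal.ofReal ‖F y‖ + ENNReal.ofReal (∫ t in x..2*x, ‖F' t‖) :=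
          ENNReal.ofReal_add_le
      _ = Φ0 y + D := by rw [h5, hΦ0, hnormF y (hsub hy)]
  -- step B: infimum
  set m : ℝ≥0∞ := ⨅ y : ↥s, Φ0 y.1 with hm
  have hstepB : ENNReal.ofReal (φ0 x) ≤ m + D := by
    rw [hm, ENNReal.iInf_add]
    exact le_iInf fun y => hstepA y.1 y.2
  have hmle : m ≤ 2 * Bk := by
    have h1 : m ^ l * ENNReal.ofReal (1/2) ≤ ∫⁻ t in s, Φ0 t ^ l * w t := by
      calc m ^ l * ENNReal.ofReal (1/2) ≤ m ^ l * ∫⁻ t in s, w t :=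
            mul_le_mul_right hwhalf _
        _ = ∫⁻ t in s, m ^ l * w t := (lintegral_const_mul _ hw).symm
        _ ≤ ∫⁻ t in s, Φ0 t ^ l * w t := by
            refine lintegral_mono_ae ?_
            rw [ae_restrict_iff' measurableSet_Ioo]
            refine Filter.Eventually.of_forall fun t ht => ?_
            refine mul_le_mul_left (ENNReal.rpow_le_rpow ?_ hl0.le) _
            exact iInf_le (fun y : ↥s => Φ0 y.1) ⟨t, ht⟩
    have h2 : ∫⁻ t in s, Φ0 t ^ l * w t ≤ Bk ^ l := by
      rw [hBkraw, ← ENNReal.rpow_mul, one_div_mul_cancel (ne_of_gt hl0), ENNReal.rpow_one]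
      refine le_trans (le_of_eq ?_) (lintegral_mono_set hsub)
      refine setLIntegral_congr_fun measurableSet_Ioo (fun t ht => ?_)
      rw [div_eq_mul_inv]
    have h3 : m ^ l ≤ 2 * Bk ^ l := by
      have h4 : m ^ l = (m ^ l * ENNReal.ofReal (1/2)) * 2 := by
        rw [mul_assoc, ← ENNReal.ofReal_ofNat, ← ENNReal.ofReal_mul (by norm_num)]
        norm_num
      rw [h4]
      calc (m ^ l * ENNReal.ofReal (1/2)) * 2 ≤ Bk ^ l * 2 :=
            mul_le_mul_left (h1.trans h2) 2
        _ = 2 * Bk ^ l := mul_comm _ _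
    have h5 : m = (m ^ l) ^ (1/l) := by
      rw [← ENNReal.rpow_mul, mul_one_div_cancel (ne_of_gt hl0), ENNReal.rpow_one]
    rw [h5]
    calc (m ^ l) ^ (1/l) ≤ (2 * Bk ^ l) ^ (1/l) := ENNReal.rpow_le_rpow h3 (by positivity)
      _ = 2 ^ (1/l) * Bk := by
          rw [ENNReal.mul_rpow_of_nonneg _ _ (by positivity), ← ENNReal.rpow_mul,
            mul_one_div_cancel (ne_of_gt hl0), ENNReal.rpow_one]
      _ ≤ 2 * Bk := by
          refine mul_le_mul_left ?_ Bk
          calc (2:ℝ≥0∞) ^ (1/l) ≤ 2 ^ (1:ℝ) :=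
                ENNReal.rpow_le_rpow_of_exponent_le (by norm_num) (by
                  rw [div_le_one hl0]; linarith)
            _ = 2 := ENNReal.rpow_one 2
  -- assemble
  calc ENNReal.ofReal (‖G x‖ * x ^ A) = ENNReal.ofReal (φ0 x) := by rw [hφ0]
    _ ≤ m + D := hstepB
    _ ≤ 2 * Bk + (Bk1 + cA * Bk) := add_le_add hmle hDle
    _ = (2 * Bk + Bk1) + cA * Bk := by ring
    _ ≤ 2 * (Bk + Bk1) + cA * (Bk + Bk1) := by
        refine add_le_add ?_ (mul_le_mul_right le_self_add cA)
        rw [mul_add]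
        exact add_le_add_right (le_mul_of_one_le_left' one_le_two) _
    _ = (2 + cA) * (Bk + Bk1) := by ring
end

section
/- Let c ∈ ℝ and f ∈ B_c(ℝ₊). Then for every s ∈ ℂ with Re s > c the Mellin transform ℳf(s) = ∫_0^∞ f(y) y^{s−1} dy converges absolutely, ℳf is holomorphic on {Re s > c}, ℳf ∈ H_c(ℂ), and for every k ∈ ℕ and every σ > c one has H_∞^{k,σ}(ℳf) ≤ B_1^{k,σ}(f), i.e. sup_{Re s = σ} |s(s+1)⋯(s+k−1) ℳf(s)| ≤ ∫_0^∞ |f^{(k)}(y)| y^{σ+k} dy/y. -/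
open MeasureTheory Set
open scoped ENNReal

/-- `P_k(s) = s (s+1) ⋯ (s+k-1)`, with `P_0 = 1`. -/
noncomputable def Pk (k : ℕ) (s : ℂ) : ℂ := ∏ j ∈ Finset.range k, (s + j)

/-- Membership in the space `H_c(ℂ)`: `M` is holomorphic on `{Re s > c}` and
`P_k · M` is bounded on every vertical strip `a ≤ Re s ≤ b` with `c < a`. -/
def MemHc (c : ℝ) (M : ℂ → ℂ) : Prop :=
  DifferentiableOn ℂ M {s : ℂ | c < s.re} ∧
  ∀ (k : ℕ) (a b : ℝ), c < a →
    ∃ K : ℝ, ∀ s : ℂ, a ≤ s.re → s.re ≤ b → ‖Pk k s * M s‖ ≤ K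

/-- `H_∞^{k,σ}(M) = sup_{Re s = σ} |P_k(s) M(s)|` (valued in `ℝ≥0∞`). -/
noncomputable def HinfNorm (M : ℂ → ℂ) (k : ℕ) (σ : ℝ) : ℝ≥0∞ :=
  ⨆ τ : ℝ, ENNReal.ofReal ‖Pk k (σ + τ * Complex.I) * M (σ + τ * Complex.I)‖

/-- Membership in the space `B_c(ℝ₊)`: `f` is smooth on `(0,∞)` and
`f^{(k)}(y) y^{σ+k}` is bounded on `(0,∞)` for every `k` and every `σ > c`. -/
def MemBc (c : ℝ) (f : ℝ → ℂ) : Prop :=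
  ContDiffOn ℝ (⊤ : ℕ∞) f (Ioi 0) ∧
  ∀ (k : ℕ) (σ : ℝ), c < σ →
    ∃ K : ℝ, ∀ y : ℝ, 0 < y → ‖iteratedDerivWithin k f (Ioi 0) y‖ * y ^ (σ + (k:ℝ)) ≤ K

/-- `B_1^{k,σ}(f) = ∫_0^∞ |f^{(k)}(y)| y^{σ+k} dy/y` (valued in `ℝ≥0∞`). -/
noncomputable def B1Norm (f : ℝ → ℂ) (k : ℕ) (σ : ℝ) : ℝ≥0∞ :=
  ∫⁻ y in Ioi (0:ℝ),
    ENNReal.ofReal (‖iteratedDerivWithin k f (Ioi 0) y‖ * y ^ (σ + (k:ℝ)))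
      / ENNReal.ofReal y

open Filter Topology

open Asymptotics in
lemma aux_hasDerivAt_cpow {w : ℂ} {x : ℝ} (hx : 0 < x) :
    HasDerivAt (fun y : ℝ => (y : ℂ) ^ w) (w * (x : ℂ) ^ (w - 1)) x := by
  rcases eq_or_ne w 0 with rfl | hw
  · simpa using hasDerivAt_const x (1 : ℂ)
  · have hr : w - 1 ≠ -1 := by
      intro h
      exact hw (by linear_combination h)
    have h := (hasDerivAt_ofReal_cpow_const' hx.ne' hr).const_mul w
    rw [sub_add_cancel] at h
    have heq : (fun y : ℝ => w * ((y : ℂ) ^ w / w)) = fun y : ℝ => (y : ℂ) ^ w := by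
      funext y; field_simp
    rw [heq] at h
    exact h

lemma aux_isBigO {F : ℝ → ℂ} {p K : ℝ} (hK : ∀ y : ℝ, 0 < y → ‖F y‖ * y ^ p ≤ K)
    {l : Filter ℝ} (hl : ∀ᶠ y in l, (0:ℝ) < y) :
    F =O[l] (fun y : ℝ => y ^ (-p)) := by
  rw [Asymptotics.isBigO_iff]
  refine ⟨K, ?_⟩
  filter_upwards [hl] with y hy
  rw [Real.norm_eq_abs, abs_of_pos (Real.rpow_pos_of_pos hy _), Real.rpow_neg hy.le,
    ← div_eq_mul_inv, le_div_iff₀ (Real.rpow_pos_of_pos hy _)]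
  exact hK y hy

lemma aux_hasDerivAt {f : ℝ → ℂ} (hf : ContDiffOn ℝ (⊤ : ℕ∞) f (Ioi 0)) (k : ℕ) {y : ℝ} (hy : 0 < y) :
    HasDerivAt (iteratedDerivWithin k f (Ioi 0))
      (iteratedDerivWithin (k+1) f (Ioi 0) y) y := by
  have hu : UniqueDiffOn ℝ (Ioi (0:ℝ)) := uniqueDiffOn_Ioi 0
  have hdiff : DifferentiableOn ℝ (iteratedDerivWithin k f (Ioi 0)) (Ioi 0) :=
    hf.differentiableOn_iteratedDerivWithin (by exact_mod_cast ENat.coe_lt_top k) hu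
  have h2 := ((hdiff y hy).differentiableAt (Ioi_mem_nhds hy)).hasDerivAt
  rw [iteratedDerivWithin_succ, derivWithin_of_isOpen isOpen_Ioi hy]
  exact h2

lemma aux_integrable {c : ℝ} {f : ℝ → ℂ} (hf : MemBc c f) (k : ℕ) {s : ℂ} (hs : c < s.re) :
    IntegrableOn (fun y : ℝ => iteratedDerivWithin k f (Ioi 0) y * (y:ℂ) ^ (s + k - 1))
      (Ioi 0) := by
  have hu : UniqueDiffOn ℝ (Ioi (0:ℝ)) := uniqueDiffOn_Ioi 0
  have hloc : LocallyIntegrableOn (iteratedDerivWithin k f (Ioi 0)) (Ioi 0) :=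
    (hf.1.continuousOn_iteratedDerivWithin (by exact_mod_cast le_top) hu).locallyIntegrableOn measurableSet_Ioi
  obtain ⟨K₁, hK₁⟩ := hf.2 k ((c + s.re)/2) (by linarith)
  obtain ⟨K₂, hK₂⟩ := hf.2 k (s.re + 1) (by linarith)
  have h := mellinConvergent_of_isBigO_rpow (E := ℂ) (s := s + k)
      (a := (s.re + 1) + (k:ℝ)) (b := (c + s.re)/2 + (k:ℝ)) hloc
      (aux_isBigO hK₂ (eventually_gt_atTop 0))
      (by simp only [Complex.add_re, Complex.natCast_re]; linarith)
      (aux_isBigO hK₁ (eventually_mem_nhdsWithin))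
      (by simp only [Complex.add_re, Complex.natCast_re]; linarith)
  refine h.congr_fun (fun y hy => ?_) measurableSet_Ioi
  simp [smul_eq_mul, mul_comm]

lemma aux_integrable_norm {c : ℝ} {f : ℝ → ℂ} (hf : MemBc c f) (k : ℕ) {σ : ℝ} (hσ : c < σ) :
    IntegrableOn
      (fun y : ℝ => ‖iteratedDerivWithin k f (Ioi 0) y‖ * y ^ (σ + (k:ℝ) - 1)) (Ioi 0) := by
  have h := (aux_integrable hf k (s := (σ:ℂ)) (by simpa using hσ)).norm
  refine IntegrableOn.congr_fun h (fun y hy => ?_) measurableSet_Ioi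
  have hy' : (0:ℝ) < y := hy
  simp [norm_mul, Complex.norm_cpow_eq_rpow_re_of_pos hy',
    Complex.add_re, Complex.sub_re]

lemma aux_tendsto_zero {c : ℝ} {f : ℝ → ℂ} (hf : MemBc c f) (k : ℕ) {s : ℂ} (hs : c < s.re) :
    Tendsto (fun y : ℝ => iteratedDerivWithin k f (Ioi 0) y * (y:ℂ) ^ (s + k))
        (𝓝[>] (0:ℝ)) (𝓝 0) ∧
      Tendsto (fun y : ℝ => iteratedDerivWithin k f (Ioi 0) y * (y:ℂ) ^ (s + k)) atTop (𝓝 0) := by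
  have hnorm : ∀ y : ℝ, 0 < y →
      ‖iteratedDerivWithin k f (Ioi 0) y * (y:ℂ) ^ (s + k)‖
        = ‖iteratedDerivWithin k f (Ioi 0) y‖ * y ^ (s.re + (k:ℝ)) := fun y hy => by
    simp [norm_mul, Complex.norm_cpow_eq_rpow_re_of_pos hy,
      Complex.add_re]
  constructor
  · obtain ⟨K₁, hK₁⟩ := hf.2 k ((c + s.re)/2) (by linarith)
    set σ₁ := (c + s.re)/2 with hσ₁
    have hε : (0:ℝ) < s.re - σ₁ := by rw [hσ₁]; linarith
    have htd : Tendsto (fun y : ℝ => K₁ * y ^ (s.re - σ₁)) (𝓝[>] (0:ℝ)) (𝓝 0) := by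
      have h0 : Tendsto (fun y : ℝ => y ^ (s.re - σ₁)) (𝓝[>] (0:ℝ)) (𝓝 ((0:ℝ) ^ (s.re - σ₁))) :=
        ((Real.continuousAt_rpow_const 0 _ (Or.inr hε.le)).continuousWithinAt)
      rw [Real.zero_rpow hε.ne'] at h0
      simpa using tendsto_const_nhds.mul h0
    refine squeeze_zero_norm' ?_ htd
    filter_upwards [eventually_mem_nhdsWithin] with y (hy : (0:ℝ) < y)
    rw [hnorm y hy, show s.re + (k:ℝ) = (σ₁ + k) + (s.re - σ₁) by ring, Real.rpow_add hy,
      ← mul_assoc]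
    exact mul_le_mul_of_nonneg_right (hK₁ y hy) (Real.rpow_nonneg hy.le _)
  · obtain ⟨K₂, hK₂⟩ := hf.2 k (s.re + 1) (by linarith)
    have htd : Tendsto (fun y : ℝ => K₂ * y ^ (-(1:ℝ))) atTop (𝓝 0) := by
      simpa using tendsto_const_nhds.mul (tendsto_rpow_neg_atTop one_pos)
    refine squeeze_zero_norm' ?_ htd
    filter_upwards [eventually_gt_atTop (0:ℝ)] with y hy
    rw [hnorm y hy, show s.re + (k:ℝ) = ((s.re + 1) + k) + (-1) by ring, Real.rpow_add hy,
      ← mul_assoc]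
    exact mul_le_mul_of_nonneg_right (hK₂ y hy) (Real.rpow_nonneg hy.le _)

lemma aux_ibp {c : ℝ} {f : ℝ → ℂ} (hf : MemBc c f) (k : ℕ) {s : ℂ} (hs : c < s.re) :
    (s + k) * ∫ y in Ioi (0:ℝ), iteratedDerivWithin k f (Ioi 0) y * (y:ℂ) ^ (s + k - 1)
      = - ∫ y in Ioi (0:ℝ), iteratedDerivWithin (k+1) f (Ioi 0) y * (y:ℂ) ^ (s + k) := by
  have huv' : IntegrableOn
      (iteratedDerivWithin k f (Ioi 0) * fun y : ℝ => (s + k) * (y:ℂ) ^ (s + k - 1))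
      (Ioi 0) := by
    have h := (aux_integrable hf k hs).const_mul (s + k)
    refine IntegrableOn.congr_fun h (fun y hy => ?_) measurableSet_Ioi
    simp [Pi.mul_apply]; ring
  have hu'v : IntegrableOn
      (iteratedDerivWithin (k+1) f (Ioi 0) * fun y : ℝ => (y:ℂ) ^ (s + k)) (Ioi 0) := by
    have h := aux_integrable hf (k+1) hs
    refine IntegrableOn.congr_fun h (fun y hy => ?_) measurableSet_Ioi
    simp only [Pi.mul_apply]
    congr 2
    push_cast
    ring
  have h := integral_Ioi_mul_deriv_eq_deriv_mul (a := 0)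
    (u := iteratedDerivWithin k f (Ioi 0)) (u' := iteratedDerivWithin (k+1) f (Ioi 0))
    (v := fun y : ℝ => (y:ℂ) ^ (s + k)) (v' := fun y : ℝ => (s + k) * (y:ℂ) ^ (s + k - 1))
    (a' := 0) (b' := 0)
    (fun y hy => aux_hasDerivAt hf.1 k hy)
    (fun y hy => aux_hasDerivAt_cpow hy)
    huv' hu'v (aux_tendsto_zero hf k hs).1 (aux_tendsto_zero hf k hs).2
  rw [sub_zero, zero_sub] at h
  rw [← h, ← integral_const_mul]
  refine setIntegral_congr_fun measurableSet_Ioi (fun y hy => ?_)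
  ring

lemma aux_identity {c : ℝ} {f : ℝ → ℂ} (hf : MemBc c f) (k : ℕ) {s : ℂ} (hs : c < s.re) :
    Pk k s * ∫ y in Ioi (0:ℝ), f y * (y:ℂ) ^ (s - 1)
      = (-1)^k * ∫ y in Ioi (0:ℝ), iteratedDerivWithin k f (Ioi 0) y * (y:ℂ) ^ (s + k - 1) := by
  induction k with
  | zero => simp [Pk]
  | succ k ih =>
    have h := aux_ibp hf k hs
    have hexp : s + ((k+1:ℕ):ℂ) - 1 = s + (k:ℂ) := by push_cast; ring
    rw [hexp, Pk, Finset.prod_range_succ, ← Pk, pow_succ,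
      mul_comm (Pk k s) (s + (k:ℂ)), mul_assoc, ih,
      show (s + (k:ℂ)) * ((-1)^k * ∫ y in Ioi (0:ℝ),
          iteratedDerivWithin k f (Ioi 0) y * (y:ℂ) ^ (s + k - 1))
        = (-1)^k * ((s + (k:ℂ)) * ∫ y in Ioi (0:ℝ),
          iteratedDerivWithin k f (Ioi 0) y * (y:ℂ) ^ (s + k - 1)) by ring, h]
    ring

lemma aux_bound {c : ℝ} {f : ℝ → ℂ} (hf : MemBc c f) (k : ℕ) {s : ℂ} (hs : c < s.re) :
    ‖Pk k s * ∫ y in Ioi (0:ℝ), f y * (y:ℂ) ^ (s - 1)‖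
      ≤ ∫ y in Ioi (0:ℝ),
          ‖iteratedDerivWithin k f (Ioi 0) y‖ * y ^ (s.re + (k:ℝ) - 1) := by
  rw [aux_identity hf k hs, norm_mul, norm_pow, norm_neg, norm_one, one_pow, one_mul]
  refine le_trans (norm_integral_le_integral_norm _) (le_of_eq ?_)
  refine setIntegral_congr_fun measurableSet_Ioi (fun y hy => ?_)
  have hy' : (0:ℝ) < y := hy
  simp [norm_mul, Complex.norm_cpow_eq_rpow_re_of_pos hy',
    Complex.add_re, Complex.sub_re]

/-- For `f ∈ B_c(ℝ₊)`: the Mellin transform `ℳf(s) = ∫_0^∞ f(y) y^{s-1} dy` converges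
absolutely for `Re s > c`, is holomorphic there, lies in `H_c(ℂ)`, and satisfies
`H_∞^{k,σ}(ℳf) ≤ B_1^{k,σ}(f)` for all `k ∈ ℕ` and `σ > c`. -/
theorem stmt_11 (c : ℝ) (f : ℝ → ℂ) (hf : MemBc c f) :
    (∀ s : ℂ, c < s.re →
      IntegrableOn (fun y : ℝ => f y * (y : ℂ) ^ (s - 1)) (Ioi 0)) ∧
    DifferentiableOn ℂ
      (fun s : ℂ => ∫ y in Ioi (0:ℝ), f y * (y : ℂ) ^ (s - 1)) {s : ℂ | c < s.re} ∧
    MemHc c (fun s : ℂ => ∫ y in Ioi (0:ℝ), f y * (y : ℂ) ^ (s - 1)) ∧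
    ∀ (k : ℕ) (σ : ℝ), c < σ →
      HinfNorm (fun s : ℂ => ∫ y in Ioi (0:ℝ), f y * (y : ℂ) ^ (s - 1)) k σ
        ≤ B1Norm f k σ := by
  have hint : ∀ s : ℂ, c < s.re →
      IntegrableOn (fun y : ℝ => f y * (y : ℂ) ^ (s - 1)) (Ioi 0) := by
    intro s hs
    refine IntegrableOn.congr_fun (aux_integrable hf 0 hs) (fun y hy => ?_) measurableSet_Ioi
    simp
  have hmell : (fun s : ℂ => ∫ y in Ioi (0:ℝ), f y * (y : ℂ) ^ (s - 1)) = mellin f := by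
    funext s
    rw [mellin]
    exact setIntegral_congr_fun measurableSet_Ioi fun y hy => by
      simp [smul_eq_mul, mul_comm]
  have hdiff : DifferentiableOn ℂ
      (fun s : ℂ => ∫ y in Ioi (0:ℝ), f y * (y : ℂ) ^ (s - 1)) {s : ℂ | c < s.re} := by
    rw [hmell]
    intro s hs
    have hs' : c < s.re := hs
    have hloc : LocallyIntegrableOn f (Ioi 0) :=
      (hf.1.continuousOn).locallyIntegrableOn measurableSet_Ioi
    obtain ⟨K₁, hK₁⟩ := hf.2 0 ((c + s.re)/2) (by linarith)
    obtain ⟨K₂, hK₂⟩ := hf.2 0 (s.re + 1) (by linarith)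
    have hK₁' : ∀ y : ℝ, 0 < y → ‖f y‖ * y ^ ((c + s.re)/2 + ((0:ℕ):ℝ)) ≤ K₁ := by
      simpa using hK₁
    have hK₂' : ∀ y : ℝ, 0 < y → ‖f y‖ * y ^ ((s.re + 1) + ((0:ℕ):ℝ)) ≤ K₂ := by
      simpa using hK₂
    refine (mellin_differentiableAt_of_isBigO_rpow (a := (s.re + 1) + ((0:ℕ):ℝ))
      (b := (c + s.re)/2 + ((0:ℕ):ℝ)) hloc
      (aux_isBigO hK₂' (eventually_gt_atTop 0)) (by push_cast; linarith)
      (aux_isBigO hK₁' (eventually_mem_nhdsWithin)) (by push_cast; linarith)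
      ).differentiableWithinAt
  refine ⟨hint, hdiff, ⟨hdiff, ?_⟩, ?_⟩
  · -- strip bounds
    intro k a b ha
    set b' := max a b with hb'def
    have hb' : c < b' := lt_of_lt_of_le ha (le_max_left _ _)
    refine ⟨(∫ y in Ioi (0:ℝ), ‖iteratedDerivWithin k f (Ioi 0) y‖ * y ^ (a + (k:ℝ) - 1))
        + ∫ y in Ioi (0:ℝ), ‖iteratedDerivWithin k f (Ioi 0) y‖ * y ^ (b' + (k:ℝ) - 1),
      fun s h1 h2 => ?_⟩
    have hcs : c < s.re := lt_of_lt_of_le ha h1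
    refine (aux_bound hf k hcs).trans ?_
    have hmono : (∫ y in Ioi (0:ℝ), ‖iteratedDerivWithin k f (Ioi 0) y‖ * y ^ (s.re + (k:ℝ) - 1))
        ≤ ∫ y in Ioi (0:ℝ), (‖iteratedDerivWithin k f (Ioi 0) y‖ * y ^ (a + (k:ℝ) - 1)
            + ‖iteratedDerivWithin k f (Ioi 0) y‖ * y ^ (b' + (k:ℝ) - 1)) := by
      refine setIntegral_mono_on (aux_integrable_norm hf k hcs)
        ((aux_integrable_norm hf k ha).add (aux_integrable_norm hf k hb'))
        measurableSet_Ioi (fun y hy => ?_)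
      have hy' : (0:ℝ) < y := hy
      rcases le_total y 1 with hy1 | hy1
      · have h3 : y ^ (s.re + (k:ℝ) - 1) ≤ y ^ (a + (k:ℝ) - 1) :=
          Real.rpow_le_rpow_of_exponent_ge hy' hy1 (by linarith)
        have h4 := mul_le_mul_of_nonneg_left h3 (norm_nonneg (iteratedDerivWithin k f (Ioi 0) y))
        have h5 : 0 ≤ ‖iteratedDerivWithin k f (Ioi 0) y‖ * y ^ (b' + (k:ℝ) - 1) :=
          mul_nonneg (norm_nonneg _) (Real.rpow_nonneg hy'.le _)
        linarith
      · have hsb : s.re ≤ b' := le_trans h2 (le_max_right a b)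
        have h3 : y ^ (s.re + (k:ℝ) - 1) ≤ y ^ (b' + (k:ℝ) - 1) :=
          Real.rpow_le_rpow_of_exponent_le hy1 (by linarith)
        have h4 := mul_le_mul_of_nonneg_left h3 (norm_nonneg (iteratedDerivWithin k f (Ioi 0) y))
        have h5 : 0 ≤ ‖iteratedDerivWithin k f (Ioi 0) y‖ * y ^ (a + (k:ℝ) - 1) :=
          mul_nonneg (norm_nonneg _) (Real.rpow_nonneg hy'.le _)
        linarith
    refine hmono.trans (le_of_eq ?_)
    exact integral_add (aux_integrable_norm hf k ha) (aux_integrable_norm hf k hb')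
  · -- Hinf ≤ B1
    intro k σ hσ
    have hB : B1Norm f k σ = ∫⁻ y in Ioi (0:ℝ),
        ENNReal.ofReal (‖iteratedDerivWithin k f (Ioi 0) y‖ * y ^ (σ + (k:ℝ) - 1)) := by
      rw [B1Norm]
      refine setLIntegral_congr_fun measurableSet_Ioi (fun y hy => ?_)
      have hy' : (0:ℝ) < y := hy
      rw [← ENNReal.ofReal_div_of_pos hy']
      congr 1
      rw [mul_div_assoc, ← Real.rpow_sub_one hy'.ne']
    rw [hB, HinfNorm]
    refine iSup_le fun τ => ?_
    set s : ℂ := (σ:ℂ) + (τ:ℂ) * Complex.I with hsdef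
    have hres : s.re = σ := by simp [hsdef]
    have hcs : c < s.re := by rw [hres]; exact hσ
    have hbd := aux_bound hf k hcs
    rw [hres] at hbd
    refine le_trans (ENNReal.ofReal_le_ofReal hbd) (le_of_eq ?_)
    refine ofReal_integral_eq_lintegral_ofReal (aux_integrable_norm hf k hσ) ?_
    filter_upwards [ae_restrict_mem measurableSet_Ioi] with y (hy : (0:ℝ) < y)
    exact mul_nonneg (norm_nonneg _) (Real.rpow_nonneg hy.le _)
end

section
/- Let f ∈ 𝓢(ℝ²), and for n ∈ ℤ and t > 0 define the Fourier coefficient f_n(t) = (1/(2π)) ∫_0^{2π} f(t cos θ, t sin θ) e^{inθ} dθ. Then for every k, l ∈ ℕ and every σ > 0 there exist a constant C > 0 and a finite family of Schwartz seminorms on 𝓢(ℝ²) with maximum S*, both independent of n, such that for every n ∈ ℤ with n ≠ 0 and every t > 0: t^{σ+k} |f_n^{(k)}(t)| ≤ C · |n|^{−l} · S*(f). -/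
/-!
With `g(t, θ) = f(t cos θ, t sin θ)`, differentiating under the integral sign shows that
`f_n^{(k)}(t)` is the angular Fourier coefficient of `∂_t^k g(t, ·)`, and `l` integrations by
parts in `θ`, without boundary terms by periodicity, turn it into `(-in)^{-l}` times the
coefficient of `∂_θ^l ∂_t^k g(t, ·)`. That mixed partial is bounded by the `(k + l)`-th derivative
of `g = f ∘ polarCoord.symm`. By Faà di Bruno's bound, this derivative is at most a polynomial
in `t` (from the derivatives of the polar map) times derivatives of `f` at a point of norm
comparable to `t`, and the Schwartz decay of `f` absorbs both this polynomial and `t^{σ+k}`.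
-/

open Real
open scoped ContDiff

section DirDeriv

variable {E F : Type*} [NormedAddCommGroup E] [NormedSpace ℝ E] [NormedAddCommGroup F]
  [NormedSpace ℝ F]

noncomputable def dirDeriv (v : E) (G : E → F) : E → F := fun p => fderiv ℝ G p v

theorem contDiff_dirDeriv {G : E → F} (hG : ContDiff ℝ ∞ G) (v : E) :
    ContDiff ℝ ∞ (dirDeriv v G) :=
  (hG.fderiv_right (m := ∞) le_rfl).clm_apply contDiff_const

theorem contDiff_dirDeriv_iterate {G : E → F} (hG : ContDiff ℝ ∞ G) (v : E) (m : ℕ) :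
    ContDiff ℝ ∞ ((dirDeriv v)^[m] G) := by
  induction m with
  | zero => exact hG
  | succ m ih => rw [Function.iterate_succ_apply']; exact contDiff_dirDeriv ih v

theorem norm_iteratedFDeriv_dirDeriv_le {G : E → F} (hG : ContDiff ℝ ∞ G) (v : E) (r : ℕ)
    (p : E) : ‖iteratedFDeriv ℝ r (dirDeriv v G) p‖ ≤ ‖v‖ * ‖iteratedFDeriv ℝ (r + 1) G p‖ := by
  rw [← norm_iteratedFDeriv_fderiv]
  exact norm_iteratedFDeriv_clm_apply_const (hG.fderiv_right (m := ∞) le_rfl).contDiffAt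
    (mod_cast le_top)

theorem norm_iteratedFDeriv_dirDeriv_iterate_le {G : E → F} (hG : ContDiff ℝ ∞ G) {v : E}
    (hv : ‖v‖ ≤ 1) (m r : ℕ) (p : E) :
    ‖iteratedFDeriv ℝ r ((dirDeriv v)^[m] G) p‖ ≤ ‖iteratedFDeriv ℝ (r + m) G p‖ := by
  induction m generalizing r with
  | zero => rfl
  | succ m ih =>
    rw [Function.iterate_succ_apply', ← add_assoc, add_right_comm]
    calc ‖iteratedFDeriv ℝ r (dirDeriv v ((dirDeriv v)^[m] G)) p‖
        ≤ ‖v‖ * ‖iteratedFDeriv ℝ (r + 1) ((dirDeriv v)^[m] G) p‖ :=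
          norm_iteratedFDeriv_dirDeriv_le (contDiff_dirDeriv_iterate hG v m) v r p
      _ ≤ 1 * ‖iteratedFDeriv ℝ (r + 1 + m) G p‖ := by gcongr; exact ih (r + 1)
      _ = _ := one_mul _

theorem Function.Periodic.dirDeriv {G : E → F} {w : E} (h : Function.Periodic G w) (v : E) :
    Function.Periodic (_root_.dirDeriv v G) w := fun p => by
  simp only [_root_.dirDeriv, ← fderiv_comp_add_right, h.funext]

theorem Function.Periodic.dirDeriv_iterate {G : E → F} {w : E} (h : Function.Periodic G w)
    (v : E) (m : ℕ) : Function.Periodic ((_root_.dirDeriv v)^[m] G) w := by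
  induction m with
  | zero => exact h
  | succ m ih => rw [Function.iterate_succ_apply']; exact ih.dirDeriv v

theorem hasDerivAt_comp_mk_left {G : ℝ × E → F} {s : ℝ} {y : E}
    (hG : DifferentiableAt ℝ G (s, y)) :
    HasDerivAt (fun s => G (s, y)) (dirDeriv (1, 0) G (s, y)) s :=
  hG.hasFDerivAt.comp_hasDerivAt s ((hasDerivAt_id s).prodMk (hasDerivAt_const s y))

theorem hasDerivAt_comp_mk_right {G : E × ℝ → F} {x : E} {s : ℝ}
    (hG : DifferentiableAt ℝ G (x, s)) :
    HasDerivAt (fun s => G (x, s)) (dirDeriv (0, 1) G (x, s)) s :=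
  hG.hasFDerivAt.comp_hasDerivAt s ((hasDerivAt_const s x).prodMk (hasDerivAt_id s))

end DirDeriv

section PolarCoord

variable {E F : Type*} [NormedAddCommGroup E] [NormedSpace ℝ E] [NormedAddCommGroup F]
  [NormedSpace ℝ F]

theorem abs_iteratedDeriv_cos_le_one_and_abs_iteratedDeriv_sin_le_one (j : ℕ) (θ : ℝ) :
    |iteratedDeriv j cos θ| ≤ 1 ∧ |iteratedDeriv j sin θ| ≤ 1 := by
  induction j generalizing θ with
  | zero => simp [abs_cos_le_one, abs_sin_le_one]
  | succ j ih =>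
    rw [iteratedDeriv_succ', iteratedDeriv_succ', Real.deriv_cos', Real.deriv_sin,
      iteratedDeriv_fun_neg, abs_neg]
    exact (ih θ).symm

theorem norm_iteratedFDeriv_fst_le (j : ℕ) (q : E × F) :
    ‖iteratedFDeriv ℝ j (Prod.fst : E × F → E) q‖ ≤ 1 + ‖q.1‖ := by
  have hfst : fderiv ℝ (Prod.fst : E × F → E) = fun _ => ContinuousLinearMap.fst ℝ E F :=
    funext fun _ => fderiv_fst
  rcases j with _ | _ | j
  · simp
  · rw [← norm_iteratedFDeriv_fderiv, hfst, norm_iteratedFDeriv_zero]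
    linarith [ContinuousLinearMap.norm_fst_le ℝ E F, norm_nonneg q.1]
  · rw [← norm_iteratedFDeriv_fderiv, hfst, iteratedFDeriv_const_of_ne (by omega)]
    simp only [Pi.zero_apply, norm_zero]
    positivity

theorem norm_iteratedFDeriv_comp_snd_le {h : ℝ → F} (hh : ContDiff ℝ ∞ h) (j : ℕ) (q : E × ℝ) :
    ‖iteratedFDeriv ℝ j (fun q : E × ℝ => h q.2) q‖ ≤ ‖iteratedDeriv j h q.2‖ := by
  rw [← norm_iteratedFDeriv_eq_norm_iteratedDeriv]
  change ‖iteratedFDeriv ℝ j (h ∘ ContinuousLinearMap.snd ℝ E ℝ) q‖ ≤ _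
  rw [ContinuousLinearMap.iteratedFDeriv_comp_right _ hh q (mod_cast le_top)]
  refine (ContinuousMultilinearMap.norm_compContinuousLinearMap_le _ _).trans ?_
  exact mul_le_of_le_one_right (norm_nonneg _) (Finset.prod_le_one (fun _ _ => norm_nonneg _)
    fun _ _ => ContinuousLinearMap.norm_snd_le ℝ E ℝ)

theorem norm_iteratedFDeriv_fst_mul_le {h : ℝ → ℝ} (hh : ContDiff ℝ ∞ h)
    (hb : ∀ j θ, |iteratedDeriv j h θ| ≤ 1) (i : ℕ) (q : ℝ × ℝ) :
    ‖iteratedFDeriv ℝ i (fun q : ℝ × ℝ => q.1 * h q.2) q‖ ≤ 2 ^ i * (1 + ‖q.1‖) := by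
  refine (norm_iteratedFDeriv_mul_le contDiff_fst (hh.comp contDiff_snd) q
    (mod_cast le_top)).trans ?_
  calc ∑ j ∈ Finset.range (i + 1), (i.choose j : ℝ) *
          ‖iteratedFDeriv ℝ j (fun q : ℝ × ℝ => q.1) q‖ *
          ‖iteratedFDeriv ℝ (i - j) (fun q : ℝ × ℝ => h q.2) q‖
      ≤ ∑ j ∈ Finset.range (i + 1), (i.choose j : ℝ) * (1 + ‖q.1‖) * 1 := by
        gcongr with j
        · exact norm_iteratedFDeriv_fst_le j q
        · exact (norm_iteratedFDeriv_comp_snd_le hh _ q).trans (hb _ _)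
      _ = 2 ^ i * (1 + ‖q.1‖) := by
        rw [← Finset.sum_mul, ← Finset.sum_mul, mul_one]
        exact_mod_cast congrArg (· * (1 + ‖q.1‖))
          (congrArg (Nat.cast (R := ℝ)) (Nat.sum_range_choose i))

theorem polarCoord_symm_eq :
    ⇑polarCoord.symm = fun q : ℝ × ℝ => (q.1 * cos q.2, q.1 * sin q.2) :=
  funext polarCoord_symm_apply

theorem contDiff_polarCoord_symm : ContDiff ℝ ∞ polarCoord.symm := by
  rw [polarCoord_symm_eq]
  fun_prop

theorem periodic_polarCoord_symm : Function.Periodic polarCoord.symm (0, 2 * π) := fun q => by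
  simp

theorem norm_fst_le_two_mul_norm_polarCoord_symm (q : ℝ × ℝ) :
    ‖q.1‖ ≤ 2 * ‖polarCoord.symm q‖ := by
  have hcos : |q.1 * cos q.2| ≤ ‖polarCoord.symm q‖ := by simp
  have hsin : |q.1 * sin q.2| ≤ ‖polarCoord.symm q‖ := by simp
  rw [abs_mul] at hcos hsin
  rw [Real.norm_eq_abs]
  nlinarith [sin_sq_add_cos_sq q.2, abs_cos_le_one q.2, abs_sin_le_one q.2, sq_abs (cos q.2),
    sq_abs (sin q.2), abs_nonneg q.1, abs_nonneg (cos q.2), abs_nonneg (sin q.2)]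

theorem norm_iteratedFDeriv_polarCoord_symm_le (i : ℕ) (q : ℝ × ℝ) :
    ‖iteratedFDeriv ℝ i polarCoord.symm q‖ ≤ 2 ^ i * (1 + ‖q.1‖) := by
  have hbound := abs_iteratedDeriv_cos_le_one_and_abs_iteratedDeriv_sin_le_one
  rw [polarCoord_symm_eq, iteratedFDeriv_prodMk (by fun_prop) (by fun_prop) (mod_cast le_top),
    ContinuousMultilinearMap.opNorm_prod]
  exact max_le (norm_iteratedFDeriv_fst_mul_le contDiff_cos (fun j θ => (hbound j θ).1) i q)
    (norm_iteratedFDeriv_fst_mul_le contDiff_sin (fun j θ => (hbound j θ).2) i q)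

end PolarCoord

section Schwartz

variable {F : Type*} [NormedAddCommGroup F] [NormedSpace ℝ F]

theorem SchwartzMap.one_add_norm_fst_pow_mul_norm_iteratedFDeriv_comp_polarCoord_symm_le
    (f : SchwartzMap (ℝ × ℝ) F) (m N : ℕ) (q : ℝ × ℝ) :
    (1 + ‖q.1‖) ^ m * ‖iteratedFDeriv ℝ N (f ∘ polarCoord.symm) q‖ ≤
      N.factorial * 4 ^ (m + N) * 2 ^ (N * N) *
        (Finset.Iic (m + N, N)).sup (fun kn => SchwartzMap.seminorm ℝ kn.1 kn.2) f := by
  set S := (Finset.Iic (m + N, N)).sup (fun kn => SchwartzMap.seminorm ℝ kn.1 kn.2) f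
  set w := 1 + ‖q.1‖
  have hw : 1 ≤ w := le_add_of_nonneg_right (norm_nonneg _)
  have hdecay : ∀ i ≤ N,
      ‖iteratedFDeriv ℝ i f (polarCoord.symm q)‖ ≤ 4 ^ (m + N) * S / w ^ (m + N) := by
    intro i hi
    rw [le_div_iff₀ (by positivity)]
    have hwp : w ≤ 2 * (1 + ‖polarCoord.symm q‖) := by
      linarith [norm_fst_le_two_mul_norm_polarCoord_symm q]
    calc ‖iteratedFDeriv ℝ i f (polarCoord.symm q)‖ * w ^ (m + N)
        ≤ 2 ^ (m + N) * ((1 + ‖polarCoord.symm q‖) ^ (m + N) *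
            ‖iteratedFDeriv ℝ i f (polarCoord.symm q)‖) := by
          rw [mul_comm, ← mul_assoc, ← mul_pow]
          gcongr
      _ ≤ 2 ^ (m + N) * (2 ^ (m + N) * S) := by
          gcongr ?_ * ?_
          exact one_add_le_sup_seminorm_apply (𝕜 := ℝ) (m := (m + N, N)) le_rfl hi f _
      _ = 4 ^ (m + N) * S := by rw [← mul_assoc, ← mul_pow]; norm_num
  have hpolar : ∀ i, 1 ≤ i → i ≤ N →
      ‖iteratedFDeriv ℝ i polarCoord.symm q‖ ≤ (2 ^ N * w) ^ i := by
    intro i hi1 hiN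
    calc ‖iteratedFDeriv ℝ i polarCoord.symm q‖ ≤ 2 ^ i * w :=
          norm_iteratedFDeriv_polarCoord_symm_le i q
      _ ≤ 2 ^ N * w := by gcongr; norm_num
      _ ≤ (2 ^ N * w) ^ i :=
          le_self_pow₀ (one_le_mul_of_one_le_of_one_le (one_le_pow₀ (by norm_num)) hw) (by omega)
  have hfaa := norm_iteratedFDeriv_comp_le (f.smooth ⊤) contDiff_polarCoord_symm (mod_cast le_top)
    q hdecay hpolar
  calc w ^ m * ‖iteratedFDeriv ℝ N (f ∘ polarCoord.symm) q‖
      ≤ w ^ m * (N.factorial * (4 ^ (m + N) * S / w ^ (m + N)) * (2 ^ N * w) ^ N) := by gcongr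
    _ = N.factorial * 4 ^ (m + N) * 2 ^ (N * N) * S := by
      rw [mul_pow, ← pow_mul, pow_add]
      field_simp
      ring

end Schwartz

section AngularFourierCoeff

noncomputable def angularFourierCoeff (G : ℝ × ℝ → ℂ) (n : ℤ) (t : ℝ) : ℂ :=
  (1 / (2 * π)) • ∫ θ in (0 : ℝ)..(2 * π), G (t, θ) * Complex.exp (Complex.I * n * θ)

variable {G : ℝ × ℝ → ℂ} {n : ℤ}

theorem norm_cexp_I_mul_intCast_mul (n : ℤ) (θ : ℝ) :
    ‖Complex.exp (Complex.I * n * θ)‖ = 1 := by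
  rw [show Complex.I * n * θ = ((n * θ : ℝ) : ℂ) * Complex.I by push_cast; ring,
    Complex.norm_exp_ofReal_mul_I]

theorem norm_angularFourierCoeff_le {t M : ℝ} (hM : ∀ θ, ‖G (t, θ)‖ ≤ M) :
    ‖angularFourierCoeff G n t‖ ≤ M := by
  have hint : ‖∫ θ in (0 : ℝ)..(2 * π), G (t, θ) * Complex.exp (Complex.I * n * θ)‖ ≤
      M * |2 * π - 0| :=
    intervalIntegral.norm_integral_le_of_norm_le_const fun θ _ => by
      rw [norm_mul, norm_cexp_I_mul_intCast_mul, mul_one]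
      exact hM θ
  rw [sub_zero, abs_of_pos two_pi_pos] at hint
  rw [angularFourierCoeff, norm_smul, Real.norm_of_nonneg (by positivity)]
  calc _ ≤ 1 / (2 * π) * (M * (2 * π)) := by gcongr
    _ = M := by field_simp

theorem hasDerivAt_angularFourierCoeff (hG : ContDiff ℝ 1 G) (n : ℤ) (t : ℝ) :
    HasDerivAt (angularFourierCoeff G n) (angularFourierCoeff (dirDeriv (1, 0) G) n t) t := by
  have hcont : Continuous (dirDeriv (1, 0) G) :=
    (hG.continuous_fderiv one_ne_zero).clm_apply continuous_const
  have hcontθ : ∀ (H : ℝ × ℝ → ℂ), Continuous H → ∀ s,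
      Continuous fun θ : ℝ => H (s, θ) * Complex.exp (Complex.I * n * θ) := fun H hH s => by
    fun_prop
  obtain ⟨M, hM⟩ := ((isCompact_closedBall t 1).prod
    (isCompact_uIcc (a := (0 : ℝ)) (b := 2 * π))).exists_bound_of_continuousOn hcont.continuousOn
  refine ((intervalIntegral.hasDerivAt_integral_of_dominated_loc_of_deriv_le
    (μ := MeasureTheory.volume) (F := fun s θ => G (s, θ) * Complex.exp (Complex.I * n * θ))
    (F' := fun s θ => dirDeriv (1, 0) G (s, θ) * Complex.exp (Complex.I * n * θ))
    (bound := fun _ => M) (Metric.ball_mem_nhds t one_pos)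
    (.of_forall fun s => (hcontθ G hG.continuous s).aestronglyMeasurable)
    ((hcontθ G hG.continuous t).intervalIntegrable _ _)
    (hcontθ _ hcont t).aestronglyMeasurable ?_ intervalIntegrable_const ?_).2.const_smul
      (1 / (2 * π)))
  · refine .of_forall fun θ hθ s hs => ?_
    rw [norm_mul, norm_cexp_I_mul_intCast_mul, mul_one]
    exact hM (s, θ) ⟨Metric.ball_subset_closedBall hs, Set.uIoc_subset_uIcc hθ⟩
  · exact .of_forall fun θ _ s _ =>
      (hasDerivAt_comp_mk_left (hG.differentiable one_ne_zero _)).mul_const _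

theorem iteratedDeriv_angularFourierCoeff (hG : ContDiff ℝ ∞ G) (n : ℤ) (k : ℕ) :
    iteratedDeriv k (angularFourierCoeff G n) =
      angularFourierCoeff ((dirDeriv (1, 0))^[k] G) n := by
  induction k generalizing G with
  | zero => rfl
  | succ k ih =>
    have hderiv : deriv (angularFourierCoeff G n) = angularFourierCoeff (dirDeriv (1, 0) G) n :=
      funext fun t => (hasDerivAt_angularFourierCoeff (hG.of_le (by simp)) n t).deriv
    rw [iteratedDeriv_succ', hderiv, ih (contDiff_dirDeriv hG _), Function.iterate_succ_apply]

theorem angularFourierCoeff_dirDeriv_snd (hG : ContDiff ℝ 1 G)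
    (hper : Function.Periodic G (0, 2 * π)) (n : ℤ) (t : ℝ) :
    angularFourierCoeff (dirDeriv (0, 1) G) n t =
      -(Complex.I * n) * angularFourierCoeff G n t := by
  set e : ℝ → ℂ := fun θ => Complex.exp (Complex.I * n * θ)
  have he : ∀ θ, HasDerivAt e (Complex.I * n * e θ) θ := fun θ => by
    simpa [e, mul_comm] using ((hasDerivAt_id θ).ofReal_comp.const_mul (Complex.I * n)).cexp
  have hcont : Continuous (dirDeriv (0, 1) G) :=
    (hG.continuous_fderiv one_ne_zero).clm_apply continuous_const
  have hibp := intervalIntegral.integral_mul_deriv_eq_deriv_mul (a := 0) (b := 2 * π)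
    (u := fun θ => G (t, θ)) (v := e)
    (fun θ _ => hasDerivAt_comp_mk_right (hG.differentiable one_ne_zero _)) (fun θ _ => he θ)
    ((hcont.comp (Continuous.prodMk_right t)).intervalIntegrable _ _)
    ((continuous_const.mul (by fun_prop)).intervalIntegrable _ _)
  have hboundary : G (t, 2 * π) * e (2 * π) - G (t, 0) * e 0 = 0 := by
    have hG2π : G (t, 2 * π) = G (t, 0) := by simpa using hper (t, 0)
    have he2π : e (2 * π) = 1 := by
      rw [← Complex.exp_int_mul_two_pi_mul_I n]
      push_cast [e]
      ring_nf
    simp [hG2π, he2π, e]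
  simp only [hboundary, zero_sub, mul_left_comm _ (Complex.I * n),
    intervalIntegral.integral_const_mul] at hibp
  simp only [angularFourierCoeff, e, Complex.real_smul] at hibp ⊢
  linear_combination ((1 / (2 * π) : ℝ) : ℂ) * hibp

theorem angularFourierCoeff_dirDeriv_snd_iterate (hG : ContDiff ℝ ∞ G)
    (hper : Function.Periodic G (0, 2 * π)) (n : ℤ) (l : ℕ) (t : ℝ) :
    angularFourierCoeff ((dirDeriv (0, 1))^[l] G) n t =
      (-(Complex.I * n)) ^ l * angularFourierCoeff G n t := by
  induction l generalizing G with
  | zero => simp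
  | succ l ih =>
    rw [Function.iterate_succ_apply, ih (contDiff_dirDeriv hG _) (hper.dirDeriv _),
      angularFourierCoeff_dirDeriv_snd (hG.of_le (by simp)) hper, pow_succ, mul_assoc]

theorem norm_iteratedDeriv_angularFourierCoeff_le (hG : ContDiff ℝ ∞ G)
    (hper : Function.Periodic G (0, 2 * π)) {n : ℤ} (hn : n ≠ 0) (k l : ℕ) {t B : ℝ}
    (hB : ∀ θ, ‖iteratedFDeriv ℝ (k + l) G (t, θ)‖ ≤ B) :
    ‖iteratedDeriv k (angularFourierCoeff G n) t‖ ≤ |(n : ℝ)| ^ (-(l : ℝ)) * B := by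
  have hmixed : ∀ θ, ‖(dirDeriv (0, 1))^[l] ((dirDeriv (1, 0))^[k] G) (t, θ)‖ ≤ B :=
    fun θ =>
    calc ‖(dirDeriv (0, 1))^[l] ((dirDeriv (1, 0))^[k] G) (t, θ)‖
        = ‖iteratedFDeriv ℝ 0 ((dirDeriv (0, 1))^[l] ((dirDeriv (1, 0))^[k] G)) (t, θ)‖ :=
          norm_iteratedFDeriv_zero.symm
      _ ≤ ‖iteratedFDeriv ℝ (0 + l) ((dirDeriv (1, 0))^[k] G) (t, θ)‖ :=
          norm_iteratedFDeriv_dirDeriv_iterate_le (contDiff_dirDeriv_iterate hG _ k)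
            (by simp) l 0 (t, θ)
      _ ≤ ‖iteratedFDeriv ℝ (0 + l + k) G (t, θ)‖ :=
          norm_iteratedFDeriv_dirDeriv_iterate_le hG (by simp) k _ (t, θ)
      _ = ‖iteratedFDeriv ℝ (k + l) G (t, θ)‖ := by rw [zero_add, add_comm]
      _ ≤ B := hB θ
  have hibp := angularFourierCoeff_dirDeriv_snd_iterate
    (contDiff_dirDeriv_iterate hG (1, 0) k) (hper.dirDeriv_iterate (1, 0) k) n l t
  have hbound := norm_angularFourierCoeff_le (n := n) hmixed
  rw [hibp, norm_mul, norm_pow, norm_neg, norm_mul, Complex.norm_I, one_mul,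
    Complex.norm_intCast] at hbound
  have hn' : 0 < |(n : ℝ)| := abs_pos.2 (Int.cast_ne_zero.2 hn)
  rw [iteratedDeriv_angularFourierCoeff hG, Real.rpow_neg hn'.le, Real.rpow_natCast,
    inv_mul_eq_div, le_div_iff₀ (by positivity), mul_comm]
  exact hbound

end AngularFourierCoeff

theorem Real.rpow_le_one_add_pow_ceil {t a : ℝ} (ht : 0 ≤ t) (ha : 0 ≤ a) :
    t ^ a ≤ (1 + t) ^ ⌈a⌉₊ :=
  calc t ^ a ≤ (1 + t) ^ a := Real.rpow_le_rpow ht (by linarith) ha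
    _ ≤ (1 + t) ^ (⌈a⌉₊ : ℝ) := Real.rpow_le_rpow_of_exponent_le (by linarith) (Nat.le_ceil a)
    _ = (1 + t) ^ ⌈a⌉₊ := Real.rpow_natCast _ _

/-- For a Schwartz function `f` on `ℝ²`, the Fourier coefficients
`f_n(t) = (1/2π) ∫_0^{2π} f(t cos θ, t sin θ) e^{inθ} dθ` satisfy: for every `k, l ∈ ℕ` and
`σ > 0` there are `C > 0` and a finite family of Schwartz seminorms with maximum `S*`, both
independent of `n`, such that `t^{σ+k} |f_n^{(k)}(t)| ≤ C |n|^{-l} S*(f)` for all `n ≠ 0` and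
`t > 0`. -/
theorem stmt_13 (f : SchwartzMap (ℝ × ℝ) ℂ) (k l : ℕ) (σ : ℝ) (hσ : 0 < σ) :
    ∃ (C : ℝ) (F : Finset (ℕ × ℕ)), 0 < C ∧
      ∀ n : ℤ, n ≠ 0 → ∀ t : ℝ, 0 < t →
        t ^ (σ + (k:ℝ)) *
          ‖iteratedDeriv k
            (fun t' : ℝ => (1 / (2 * Real.pi)) •
              ∫ θ in (0:ℝ)..(2 * Real.pi),
                f (t' * Real.cos θ, t' * Real.sin θ) * Complex.exp (Complex.I * n * θ)) t‖
          ≤ C * |(n:ℝ)| ^ (-(l:ℝ))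
              * ((F.sup fun kn => SchwartzMap.seminorm ℝ kn.1 kn.2) f) := by
  set m := ⌈σ + k⌉₊
  set N := k + l
  set C : ℝ := N.factorial * 4 ^ (m + N) * 2 ^ (N * N)
  refine ⟨C, Finset.Iic (m + N, N), by positivity, fun n hn t ht => ?_⟩
  set S := (Finset.Iic (m + N, N)).sup (fun kn => SchwartzMap.seminorm ℝ kn.1 kn.2) f
  change t ^ (σ + k) * ‖iteratedDeriv k (angularFourierCoeff (f ∘ polarCoord.symm) n) t‖ ≤ _
  have hdecay : ∀ θ, ‖iteratedFDeriv ℝ N (f ∘ polarCoord.symm) (t, θ)‖ ≤ C * S / (1 + t) ^ m :=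
    fun θ => by
      rw [le_div_iff₀ (by positivity), mul_comm]
      simpa [Real.norm_of_nonneg ht.le] using
        f.one_add_norm_fst_pow_mul_norm_iteratedFDeriv_comp_polarCoord_symm_le m N (t, θ)
  calc t ^ (σ + k) * ‖iteratedDeriv k (angularFourierCoeff (f ∘ polarCoord.symm) n) t‖
      ≤ (1 + t) ^ m * (|(n : ℝ)| ^ (-(l : ℝ)) * (C * S / (1 + t) ^ m)) :=
        mul_le_mul (Real.rpow_le_one_add_pow_ceil ht.le (by positivity))
          (norm_iteratedDeriv_angularFourierCoeff_le ((f.smooth ⊤).comp contDiff_polarCoord_symm)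
            (periodic_polarCoord_symm.comp f) hn k l hdecay) (norm_nonneg _) (by positivity)
    _ = C * |(n : ℝ)| ^ (-(l : ℝ)) * S := by field_simp
end
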